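/- arXiv:2106.03139 — 6 statements merged into one kernel-verified Lean document; each statement's English description precedes it below -/
import Mathlib

section
/- Greedy disjointification: for the circulant lower cubes D_k ⊂ [n] of common size m, there exist s ≥ n/(8m) indices k_1,…,k_s ∈ [n] such that the sets I_1 = D_{k_1}, I_l = D_{k_l} \ (D_{k_1} ∪ … ∪ D_{k_{l-1}}) satisfy |I_l| ≥ (7/8)m for all l = 1,…,s. -/
open Finset

noncomputable def pick7 {n : ℕ} [NeZero n] (D : ZMod n → Finset (ZMod n))
    (J : Finset (ZMod n)) : ZMod n :=
  (Finset.exists_min_image Finset.univ (fun k => (D k ∩ J).card)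
    ⟨0, Finset.mem_univ 0⟩).choose

lemma pick7_spec {n : ℕ} [NeZero n] (D : ZMod n → Finset (ZMod n))
    (J : Finset (ZMod n)) (k : ZMod n) :
    (D (pick7 D J) ∩ J).card ≤ (D k ∩ J).card := by
  obtain ⟨-, h⟩ := (Finset.exists_min_image Finset.univ (fun k => (D k ∩ J).card)
    ⟨0, Finset.mem_univ 0⟩).choose_spec
  exact h k (Finset.mem_univ k)

noncomputable def U7 {n : ℕ} [NeZero n] (D : ZMod n → Finset (ZMod n)) : ℕ → Finset (ZMod n)
  | 0 => ∅
  | l + 1 => U7 D l ∪ D (pick7 D (U7 D l))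

lemma count7 {n d : ℕ} [NeZero n] (p : Fin d → ℕ)
    (D : ZMod n → Finset (ZMod n))
    (hD : ∀ k, D k = Finset.univ.powerset.image
      fun I : Finset (Fin d) => k - ∑ i ∈ I, (p i : ZMod n))
    (m : ℕ) (hm : ∀ k, (D k).card = m) (J : Finset (ZMod n)) :
    ∑ k : ZMod n, (D k ∩ J).card = J.card * m := by
  set S : Finset (ZMod n) :=
    Finset.univ.powerset.image (fun I : Finset (Fin d) => ∑ i ∈ I, (p i : ZMod n)) with hSdef
  have hS : ∀ k : ZMod n, D k = S.image (fun x => k - x) := by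
    intro k
    rw [hD, hSdef, Finset.image_image]
    rfl
  have hScard : S.card = m := by
    rw [← hm 0, hS 0]
    refine (Finset.card_image_of_injective _ ?_).symm
    intro a b hab
    simpa using hab
  have hfilter : ∀ j : ZMod n,
      (Finset.univ.filter fun k => j ∈ D k) = S.image (fun x => j + x) := by
    intro j
    ext k
    simp only [Finset.mem_filter, Finset.mem_univ, true_and, hS, Finset.mem_image]
    constructor
    · rintro ⟨x, hx, hxe⟩
      exact ⟨x, hx, (sub_eq_iff_eq_add.mp hxe).symm⟩
    · rintro ⟨x, hx, hxe⟩
      exact ⟨x, hx, sub_eq_iff_eq_add.mpr hxe.symm⟩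
  calc ∑ k : ZMod n, (D k ∩ J).card
      = ∑ k : ZMod n, ∑ j ∈ J, if j ∈ D k then 1 else 0 := by
        refine Finset.sum_congr rfl fun k _ => ?_
        rw [Finset.inter_comm, ← Finset.filter_mem_eq_inter, Finset.card_filter]
    _ = ∑ j ∈ J, ∑ k : ZMod n, if j ∈ D k then 1 else 0 := Finset.sum_comm
    _ = ∑ j ∈ J, (Finset.univ.filter fun k => j ∈ D k).card := by
        refine Finset.sum_congr rfl fun j _ => ?_
        rw [Finset.card_filter]
    _ = ∑ j ∈ J, m := by
        refine Finset.sum_congr rfl fun j _ => ?_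
        rw [hfilter j, Finset.card_image_of_injective _ (add_right_injective j), hScard]
    _ = J.card * m := by rw [Finset.sum_const, smul_eq_mul]

lemma excl7 {n d : ℕ} [NeZero n] (p : Fin d → ℕ)
    (D : ZMod n → Finset (ZMod n))
    (hD : ∀ k, D k = Finset.univ.powerset.image
      fun I : Finset (Fin d) => k - ∑ i ∈ I, (p i : ZMod n))
    (m : ℕ) (hm : ∀ k, (D k).card = m) (J : Finset (ZMod n))
    (hJ : J.card * 8 ≤ n) :
    ∃ k : ZMod n, (D k ∩ J).card * 8 ≤ m := by
  by_contra hcon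
  push_neg at hcon
  have hsum : ∑ k : ZMod n, (m + 1) ≤ ∑ k : ZMod n, (D k ∩ J).card * 8 :=
    Finset.sum_le_sum fun k _ => hcon k
  rw [Finset.sum_const, ← Finset.sum_mul, count7 p D hD m hm J] at hsum
  rw [smul_eq_mul, Finset.card_univ, ZMod.card] at hsum
  have h2 : J.card * m * 8 ≤ n * m := by
    calc J.card * m * 8 = (J.card * 8) * m := by ring
      _ ≤ n * m := Nat.mul_le_mul_right m hJ
  have hn : 0 < n := Nat.pos_of_ne_zero (NeZero.ne n)
  nlinarith [hsum, h2, hn]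

theorem stmt7
    (n d : ℕ) [NeZero n] (p : Fin d → ℕ)
    (hp1 : ∀ i, 1 ≤ p i) (hmono : Monotone p) (hp2 : ∀ i, 2 * p i ≤ n)
    (D : ZMod n → Finset (ZMod n))
    (hD : ∀ k, D k = Finset.univ.powerset.image
      fun I : Finset (Fin d) => k - ∑ i ∈ I, (p i : ZMod n))
    (m : ℕ) (hm : ∀ k, (D k).card = m) :
    ∃ (s : ℕ) (k : Fin s → ZMod n), (n : ℝ) / (8 * m) ≤ s ∧
      ∀ l : Fin s, (7 / 8 : ℝ) * m ≤
        ((D (k l) \ (Finset.univ.filter fun r => r < l).biUnion fun r => D (k r)).card : ℝ) := by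
  have hn : 0 < n := Nat.pos_of_ne_zero (NeZero.ne n)
  have hmpos : 0 < m := by
    rw [← hm 0]
    apply Finset.card_pos.mpr
    rw [hD 0]
    exact ⟨0 - ∑ i ∈ (∅ : Finset (Fin d)), (p i : ZMod n),
      Finset.mem_image.mpr ⟨∅, by simp, rfl⟩⟩
  set s : ℕ := ⌈(n : ℝ) / (8 * m)⌉₊ with hs
  refine ⟨s, fun l => pick7 D (U7 D l.val), Nat.le_ceil _, fun l => ?_⟩
  -- the biUnion equals U7 D l.val
  have hUeq : ∀ t : ℕ, (Finset.range t).biUnion (fun r => D (pick7 D (U7 D r))) = U7 D t := by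
    intro t
    induction t with
    | zero => simp [U7]
    | succ t ih =>
      rw [Finset.range_add_one, Finset.biUnion_insert, ih]
      rw [U7]
      exact Finset.union_comm _ _
  have hB : ((Finset.univ.filter fun r : Fin s => r < l).biUnion
      fun r => D (pick7 D (U7 D r.val))) = U7 D l.val := by
    rw [← hUeq l.val]
    ext x
    simp only [Finset.mem_biUnion, Finset.mem_filter, Finset.mem_univ, true_and,
      Finset.mem_range]
    constructor
    · rintro ⟨r, hr, hx⟩
      exact ⟨r.val, hr, hx⟩
    · rintro ⟨j, hj, hx⟩
      exact ⟨⟨j, hj.trans l.isLt⟩, hj, hx⟩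
  rw [hB]
  -- card bound on U7
  have hU : ∀ t : ℕ, (U7 D t).card ≤ t * m := by
    intro t
    induction t with
    | zero => simp [U7]
    | succ t ih =>
      rw [U7]
      calc (U7 D t ∪ D (pick7 D (U7 D t))).card
          ≤ (U7 D t).card + (D (pick7 D (U7 D t))).card := Finset.card_union_le _ _
        _ ≤ t * m + m := by rw [hm]; omega
        _ = (t + 1) * m := by ring
  have hlt : (l.val : ℝ) < (n : ℝ) / (8 * m) := Nat.lt_ceil.mp l.isLt
  have hsmall : (U7 D l.val).card * 8 ≤ n := by
    have h1 : (l.val : ℝ) * (8 * m) < n := by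
      rw [lt_div_iff₀ (by positivity)] at hlt
      exact hlt
    have h2 : ((l.val * m * 8 : ℕ) : ℝ) < (n : ℝ) := by push_cast; linarith
    have h3 : l.val * m * 8 < n := by exact_mod_cast h2
    calc (U7 D l.val).card * 8 ≤ l.val * m * 8 := by
          have := hU l.val; omega
      _ ≤ n := h3.le
  obtain ⟨k', hk'⟩ := excl7 p D hD m hm (U7 D l.val) hsmall
  have hc : (D (pick7 D (U7 D l.val)) ∩ U7 D l.val).card * 8 ≤ m :=
    le_trans (by have := pick7_spec D (U7 D l.val) k'; omega) hk'
  set c := (D (pick7 D (U7 D l.val)) ∩ U7 D l.val).card with hcdef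
  have hsd : (D (pick7 D (U7 D l.val)) \ U7 D l.val).card = m - c := by
    have h := Finset.card_sdiff_add_card_inter (D (pick7 D (U7 D l.val))) (U7 D l.val)
    rw [hm] at h
    omega
  rw [hsd]
  have hcm : c ≤ m := by omega
  rw [Nat.cast_sub hcm]
  have hcr : (c : ℝ) * 8 ≤ m := by exact_mod_cast hc
  linarith
end

section
/- For a block diagonal matrix A with diagonal blocks A_1,…,A_m, and any p ≥ 1, the Rademacher norm satisfies ‖A‖_{ε,p} = max_{l≤m} ‖A_l‖_{ε,p}, where ‖A‖_{ε,p} := sup_{‖s‖₂,‖t‖₂≤1} (E|Σ_{ij} a_{ij} ε_{ij} s_i t_j|^p)^{1/p} and ε_{ij} are independent symmetric ±1 random variables. -/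
/-!
Split `s` and `t` along the blocks, `s = ∑ₗ sₗ` and `t = ∑ₗ tₗ`. Since `A` is block diagonal, the
random bilinear form of `A` at `(s, t)` is the sum over `l` of that of `A_l` at `(sₗ, tₗ)`, whose
`Lᵖ` norm is at most `‖sₗ‖ ‖tₗ‖ ‖A_l‖_{ε,p}` by homogeneity. Minkowski's inequality and
Cauchy–Schwarz, `∑ₗ ‖sₗ‖ ‖tₗ‖ ≤ ‖s‖ ‖t‖ ≤ 1`, give `‖A‖_{ε,p} ≤ maxₗ ‖A_l‖_{ε,p}`; the reverse
inequality holds because `A` and `A_l` agree on vectors supported in the `l`-th block.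
-/

open MeasureTheory ProbabilityTheory Finset

noncomputable section

namespace RademacherNorm

variable {Ω ι κ : Type*} [Fintype ι] [DecidableEq κ]

def randomBilinear (ε : ι × ι → Ω → ℝ) (M : ι → ι → ℝ) (s t : ι → ℝ) (ω : Ω) : ℝ :=
  ∑ i, ∑ j, M i j * ε (i, j) ω * s i * t j

def moments [MeasurableSpace Ω] (ε : ι × ι → Ω → ℝ) (μ : Measure Ω) (p : ℝ) (M : ι → ι → ℝ) :
    Set ℝ :=
  {x | ∃ s t : ι → ℝ, ∑ i, s i ^ 2 ≤ 1 ∧ ∑ j, t j ^ 2 ≤ 1 ∧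
    x = (∫ ω, |randomBilinear ε M s t ω| ^ p ∂μ) ^ (1 / p)}

def rademacherNorm [MeasurableSpace Ω] (ε : ι × ι → Ω → ℝ) (μ : Measure Ω) (p : ℝ)
    (M : ι → ι → ℝ) : ℝ :=
  sSup (moments ε μ p M)

def diagBlock (M : ι → ι → ℝ) (b : ι → κ) (l : κ) : ι → ι → ℝ :=
  fun i j => if b i = l ∧ b j = l then M i j else 0

def vecBlock (b : ι → κ) (l : κ) (s : ι → ℝ) : ι → ℝ :=
  fun i => if b i = l then s i else 0

section Vectors

lemma abs_le_one_of_sum_sq_le_one {s : ι → ℝ} (hs : ∑ i, s i ^ 2 ≤ 1) (i : ι) : |s i| ≤ 1 :=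
  sq_le_one_iff_abs_le_one _ |>.mp <|
    (single_le_sum (fun k _ => sq_nonneg (s k)) (mem_univ i)).trans hs

lemma exists_eq_sqrt_smul (s : ι → ℝ) :
    ∃ u : ι → ℝ, ∑ i, u i ^ 2 ≤ 1 ∧ s = √(∑ i, s i ^ 2) • u := by
  set S := ∑ i, s i ^ 2
  have hS : 0 ≤ S := sum_nonneg fun i _ => sq_nonneg _
  refine ⟨(√S)⁻¹ • s, ?_, ?_⟩
  · simp only [Pi.smul_apply, smul_eq_mul, mul_pow, ← mul_sum, inv_pow, Real.sq_sqrt hS]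
    exact inv_mul_le_one
  · by_cases h : √S = 0
    · have hS0 : S = 0 := Real.sqrt_eq_zero hS |>.mp h
      ext i
      simpa [h] using (sum_eq_zero_iff_of_nonneg fun k _ => sq_nonneg (s k)).mp hS0 i (mem_univ i)
    · rw [smul_smul, mul_inv_cancel₀ h, one_smul]

lemma sum_vecBlock_sq_le (b : ι → κ) (l : κ) (s : ι → ℝ) :
    ∑ i, vecBlock b l s i ^ 2 ≤ ∑ i, s i ^ 2 :=
  sum_le_sum fun i _ => by unfold vecBlock; split_ifs <;> simp [sq_nonneg]

lemma sum_sum_vecBlock_sq [Fintype κ] (b : ι → κ) (s : ι → ℝ) :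
    ∑ l, ∑ i, vecBlock b l s i ^ 2 = ∑ i, s i ^ 2 := by
  rw [sum_comm]
  exact sum_congr rfl fun i _ => by simp [vecBlock]

lemma sum_sqrt_mul_sqrt_vecBlock_le [Fintype κ] (b : ι → κ) (s t : ι → ℝ) :
    ∑ l, √(∑ i, vecBlock b l s i ^ 2) * √(∑ j, vecBlock b l t j ^ 2)
      ≤ √(∑ i, s i ^ 2) * √(∑ j, t j ^ 2) := by
  rw [← sum_sum_vecBlock_sq b s, ← sum_sum_vecBlock_sq b t]
  exact Real.sum_sqrt_mul_sqrt_le _ (fun _ => sum_nonneg fun _ _ => sq_nonneg _)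
    fun _ => sum_nonneg fun _ _ => sq_nonneg _

end Vectors

section Bilinear

variable {ε : ι × ι → Ω → ℝ}

lemma randomBilinear_smul (M : ι → ι → ℝ) (a c : ℝ) (s t : ι → ℝ) :
    randomBilinear ε M (a • s) (c • t) = (a * c) • randomBilinear ε M s t := by
  ext ω
  simp only [randomBilinear, Pi.smul_apply, smul_eq_mul, mul_sum]
  exact sum_congr rfl fun i _ => sum_congr rfl fun j _ => by ring

lemma randomBilinear_diagBlock (M : ι → ι → ℝ) (b : ι → κ) (l : κ) (s t : ι → ℝ) :
    randomBilinear ε (diagBlock M b l) s t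
      = randomBilinear ε M (vecBlock b l s) (vecBlock b l t) := by
  ext ω
  refine sum_congr rfl fun i _ => sum_congr rfl fun j _ => ?_
  simp only [diagBlock, vecBlock]
  split_ifs <;> simp_all

lemma randomBilinear_diagBlock_vecBlock (M : ι → ι → ℝ) (b : ι → κ) (l : κ) (s t : ι → ℝ) :
    randomBilinear ε (diagBlock M b l) (vecBlock b l s) (vecBlock b l t)
      = randomBilinear ε (diagBlock M b l) s t := by
  have hidem : ∀ u : ι → ℝ, vecBlock b l (vecBlock b l u) = vecBlock b l u := fun u => by
    ext i; simp only [vecBlock]; split_ifs <;> rfl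
  rw [randomBilinear_diagBlock, randomBilinear_diagBlock, hidem, hidem]

lemma randomBilinear_eq_sum_diagBlock [Fintype κ] {M : ι → ι → ℝ} {b : ι → κ}
    (hblock : ∀ i j, b i ≠ b j → M i j = 0) (s t : ι → ℝ) :
    randomBilinear ε M s t = ∑ l, randomBilinear ε (diagBlock M b l) s t := by
  have hM : ∀ i j, ∑ l, diagBlock M b l i j = M i j := fun i j => by
    by_cases h : b i = b j
    · simp [diagBlock, h]
    · simp [diagBlock, hblock i j h]
  ext ω
  rw [Finset.sum_apply]
  calc ∑ i, ∑ j, M i j * ε (i, j) ω * s i * t j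
      = ∑ i, ∑ j, ∑ l, diagBlock M b l i j * ε (i, j) ω * s i * t j := by
        simp only [← sum_mul, hM]
    _ = ∑ i, ∑ l, ∑ j, diagBlock M b l i j * ε (i, j) ω * s i * t j :=
        sum_congr rfl fun i _ => sum_comm
    _ = ∑ l, randomBilinear ε (diagBlock M b l) s t ω := sum_comm

lemma measurable_randomBilinear [MeasurableSpace Ω] (hmeas : ∀ q, Measurable (ε q))
    (M : ι → ι → ℝ) (s t : ι → ℝ) :
    Measurable (randomBilinear ε M s t) :=
  Finset.measurable_sum _ fun i _ => Finset.measurable_sum _ fun j _ =>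
    ((measurable_const.mul (hmeas (i, j))).mul_const _).mul_const _

lemma abs_randomBilinear_le (hε : ∀ q ω, |ε q ω| ≤ 1) (M : ι → ι → ℝ) (s t : ι → ℝ) (ω : Ω) :
    |randomBilinear ε M s t ω| ≤ ∑ i, ∑ j, |M i j| * |s i| * |t j| := by
  refine (abs_sum_le_sum_abs _ _).trans <| sum_le_sum fun i _ =>
    (abs_sum_le_sum_abs _ _).trans <| sum_le_sum fun j _ => ?_
  simp only [abs_mul]
  gcongr
  exact mul_le_of_le_one_right (abs_nonneg _) (hε _ ω)

end Bilinear

section Moments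

variable [MeasurableSpace Ω] {μ : Measure Ω} {ε : ι × ι → Ω → ℝ} {p : ℝ}

lemma zero_mem_moments (hp : p ≠ 0) (M : ι → ι → ℝ) : (0 : ℝ) ∈ moments ε μ p M :=
  ⟨0, 0, by simp, by simp, by simp [randomBilinear, Real.zero_rpow hp, hp]⟩

lemma rademacherNorm_nonneg (M : ι → ι → ℝ) : 0 ≤ rademacherNorm ε μ p M := by
  refine Real.sSup_nonneg fun x ⟨s, t, _, _, hx⟩ => hx ▸ ?_
  exact Real.rpow_nonneg (integral_nonneg fun ω => Real.rpow_nonneg (abs_nonneg _) _) _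

variable (hmeas : ∀ q, Measurable (ε q)) (hε : ∀ q ω, |ε q ω| ≤ 1)
include hmeas hε

lemma eLpNorm_randomBilinear [IsFiniteMeasure μ] (hp : 0 < p) (M : ι → ι → ℝ) (s t : ι → ℝ) :
    eLpNorm (randomBilinear ε M s t) (ENNReal.ofReal p) μ
      = ENNReal.ofReal ((∫ ω, |randomBilinear ε M s t ω| ^ p ∂μ) ^ (1 / p)) := by
  have hLp : MemLp (randomBilinear ε M s t) (ENNReal.ofReal p) μ :=
    .of_bound (measurable_randomBilinear hmeas M s t).aestronglyMeasurable _ <|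
      .of_forall fun ω => abs_randomBilinear_le hε M s t ω
  rw [hLp.eLpNorm_eq_integral_rpow_norm (by simpa using hp) ENNReal.ofReal_ne_top]
  simp [ENNReal.toReal_ofReal hp.le, one_div]

lemma bddAbove_moments [IsProbabilityMeasure μ] (hp : 0 < p) (M : ι → ι → ℝ) :
    BddAbove (moments ε μ p M) := by
  refine ⟨∑ i, ∑ j, |M i j|, fun x ⟨s, t, hs, ht, hx⟩ => ?_⟩
  have hbound : ∀ ω, ‖randomBilinear ε M s t ω‖ ≤ ∑ i, ∑ j, |M i j| := fun ω =>
    (abs_randomBilinear_le hε M s t ω).trans <| sum_le_sum fun i _ => sum_le_sum fun j _ =>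
      mul_le_of_le_one_right (by positivity) (abs_le_one_of_sum_sq_le_one ht j) |>.trans <|
        mul_le_of_le_one_right (abs_nonneg _) (abs_le_one_of_sum_sq_le_one hs i)
  rw [← ENNReal.ofReal_le_ofReal_iff (by positivity), hx, ← eLpNorm_randomBilinear hmeas hε hp]
  simpa using eLpNorm_le_of_ae_bound (μ := μ) (p := ENNReal.ofReal p) (.of_forall hbound)

lemma eLpNorm_randomBilinear_le [IsProbabilityMeasure μ] (hp : 0 < p) (M : ι → ι → ℝ)
    (s t : ι → ℝ) :
    eLpNorm (randomBilinear ε M s t) (ENNReal.ofReal p) μ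
      ≤ ENNReal.ofReal (√(∑ i, s i ^ 2) * √(∑ j, t j ^ 2) * rademacherNorm ε μ p M) := by
  obtain ⟨u, hu, hsu⟩ := exists_eq_sqrt_smul s
  obtain ⟨v, hv, htv⟩ := exists_eq_sqrt_smul t
  have hmem : (∫ ω, |randomBilinear ε M u v ω| ^ p ∂μ) ^ (1 / p) ∈ moments ε μ p M :=
    ⟨u, v, hu, hv, rfl⟩
  conv_lhs => rw [hsu, htv, randomBilinear_smul, eLpNorm_const_smul,
    eLpNorm_randomBilinear hmeas hε hp, Real.enorm_eq_ofReal (by positivity),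
    ← ENNReal.ofReal_mul (by positivity)]
  exact ENNReal.ofReal_le_ofReal <|
    mul_le_mul_of_nonneg_left (le_csSup (bddAbove_moments hmeas hε hp M) hmem) (by positivity)

lemma rademacherNorm_diagBlock_le [IsProbabilityMeasure μ] (hp : 0 < p) (M : ι → ι → ℝ)
    (b : ι → κ) (l : κ) : rademacherNorm ε μ p (diagBlock M b l) ≤ rademacherNorm ε μ p M := by
  refine csSup_le ⟨0, zero_mem_moments hp.ne' _⟩ fun x ⟨s, t, hs, ht, hx⟩ => ?_
  refine le_csSup (bddAbove_moments hmeas hε hp M) ⟨vecBlock b l s, vecBlock b l t,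
    (sum_vecBlock_sq_le b l s).trans hs, (sum_vecBlock_sq_le b l t).trans ht, ?_⟩
  rw [hx, randomBilinear_diagBlock]

lemma rademacherNorm_le_iSup_diagBlock [Fintype κ] [IsProbabilityMeasure μ] (hp : 1 ≤ p)
    {M : ι → ι → ℝ} {b : ι → κ} (hblock : ∀ i j, b i ≠ b j → M i j = 0) :
    rademacherNorm ε μ p M ≤ ⨆ l, rademacherNorm ε μ p (diagBlock M b l) := by
  have hp0 : 0 < p := zero_lt_one.trans_le hp
  set N := ⨆ l, rademacherNorm ε μ p (diagBlock M b l)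
  have hN0 : 0 ≤ N := Real.iSup_nonneg fun l => rademacherNorm_nonneg _
  have hNl : ∀ l, rademacherNorm ε μ p (diagBlock M b l) ≤ N :=
    le_ciSup (Set.finite_range _).bddAbove
  refine csSup_le ⟨0, zero_mem_moments hp0.ne' _⟩ fun x ⟨s, t, hs, ht, hx⟩ => ?_
  have hst : √(∑ i, s i ^ 2) * √(∑ j, t j ^ 2) ≤ 1 :=
    mul_le_one₀ (Real.sqrt_le_one.mpr hs) (Real.sqrt_nonneg _) (Real.sqrt_le_one.mpr ht)
  set a := fun l => √(∑ i, vecBlock b l s i ^ 2)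
  set c := fun l => √(∑ j, vecBlock b l t j ^ 2)
  rw [← ENNReal.ofReal_le_ofReal_iff hN0, hx, ← eLpNorm_randomBilinear hmeas hε hp0,
    randomBilinear_eq_sum_diagBlock hblock]
  calc eLpNorm (∑ l, randomBilinear ε (diagBlock M b l) s t) (ENNReal.ofReal p) μ
      ≤ ∑ l, eLpNorm (randomBilinear ε (diagBlock M b l) s t) (ENNReal.ofReal p) μ :=
        eLpNorm_sum_le (fun l _ => (measurable_randomBilinear hmeas _ s t).aestronglyMeasurable)
          (by simpa using hp)
    _ ≤ ∑ l, ENNReal.ofReal (a l * c l * N) := sum_le_sum fun l _ => by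
        rw [← randomBilinear_diagBlock_vecBlock]
        exact (eLpNorm_randomBilinear_le hmeas hε hp0 _ _ _).trans <|
          ENNReal.ofReal_le_ofReal <| mul_le_mul_of_nonneg_left (hNl l) (by positivity)
    _ = ENNReal.ofReal ((∑ l, a l * c l) * N) := by
        rw [sum_mul, ENNReal.ofReal_sum_of_nonneg fun l _ => by positivity]
    _ ≤ ENNReal.ofReal N := ENNReal.ofReal_le_ofReal <|
        mul_le_of_le_one_left hN0 ((sum_sqrt_mul_sqrt_vecBlock_le b s t).trans hst)

theorem rademacherNorm_eq_iSup_diagBlock [Fintype κ] [IsProbabilityMeasure μ] (hp : 1 ≤ p)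
    {M : ι → ι → ℝ} {b : ι → κ} (hblock : ∀ i j, b i ≠ b j → M i j = 0) :
    rademacherNorm ε μ p M = ⨆ l, rademacherNorm ε μ p (diagBlock M b l) :=
  le_antisymm (rademacherNorm_le_iSup_diagBlock hmeas hε hp hblock) <|
    Real.iSup_le (fun l => rademacherNorm_diagBlock_le hmeas hε (zero_lt_one.trans_le hp) M b l)
      (rademacherNorm_nonneg M)

end Moments

end RademacherNorm

theorem stmt9_general
    {Ω : Type*} [MeasureSpace Ω] [IsProbabilityMeasure (ℙ : Measure Ω)]
    {n m : ℕ}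
    (A : Fin n → Fin n → ℝ) (b : Fin n → Fin m)
    (hblock : ∀ i j, b i ≠ b j → A i j = 0)
    (ε : Fin n × Fin n → Ω → ℝ)
    (hmeas : ∀ q, Measurable (ε q))
    (hval : ∀ q ω, ε q ω = 1 ∨ ε q ω = -1)
    (p : ℝ) (hp : 1 ≤ p) :
    sSup {x | ∃ s t : Fin n → ℝ, ∑ i, s i ^ 2 ≤ 1 ∧ ∑ j, t j ^ 2 ≤ 1 ∧
        x = (∫ ω, |∑ i, ∑ j, A i j * ε (i, j) ω * s i * t j| ^ p) ^ (1 / p)}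
      = ⨆ l : Fin m,
        sSup {x | ∃ s t : Fin n → ℝ, ∑ i, s i ^ 2 ≤ 1 ∧ ∑ j, t j ^ 2 ≤ 1 ∧
          x = (∫ ω, |∑ i, ∑ j, (if b i = l ∧ b j = l then A i j else 0) *
            ε (i, j) ω * s i * t j| ^ p) ^ (1 / p)} := by
  have hε : ∀ q ω, |ε q ω| ≤ 1 := fun q ω => by rcases hval q ω with h | h <;> simp [h]
  exact RademacherNorm.rademacherNorm_eq_iSup_diagBlock hmeas hε hp hblock

theorem stmt9
    {Ω : Type*} [MeasureSpace Ω] [IsProbabilityMeasure (ℙ : Measure Ω)]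
    {n m : ℕ} (hm : 0 < m)
    (A : Fin n → Fin n → ℝ) (b : Fin n → Fin m)
    (hblock : ∀ i j, b i ≠ b j → A i j = 0)
    (ε : Fin n × Fin n → Ω → ℝ)
    (hmeas : ∀ q, Measurable (ε q))
    (hindep : iIndepFun ε ℙ)
    (hval : ∀ q ω, ε q ω = 1 ∨ ε q ω = -1)
    (hsym : ∀ q, ℙ {ω | ε q ω = 1} = 1 / 2)
    (p : ℝ) (hp : 1 ≤ p) :
    sSup {x | ∃ s t : Fin n → ℝ, ∑ i, s i ^ 2 ≤ 1 ∧ ∑ j, t j ^ 2 ≤ 1 ∧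
        x = (∫ ω, |∑ i, ∑ j, A i j * ε (i, j) ω * s i * t j| ^ p) ^ (1 / p)}
      = ⨆ l : Fin m,
        sSup {x | ∃ s t : Fin n → ℝ, ∑ i, s i ^ 2 ≤ 1 ∧ ∑ j, t j ^ 2 ≤ 1 ∧
          x = (∫ ω, |∑ i, ∑ j, (if b i = l ∧ b j = l then A i j else 0) *
            ε (i, j) ω * s i * t j| ^ p) ^ (1 / p)} :=
  stmt9_general A b hblock ε hmeas hval p hp
end
end

section
/- Lower bound for 0-1 Rademacher norms: for any E ⊆ [n]×[n], any I ⊆ E with |I| ≤ p, and any p ≥ 1, sup_{‖s‖₂,‖t‖₂≤1} ‖Σ_{(i,j)∈E} ε_{ij} s_i t_j‖_p ≥ (1/2) ‖1_I‖, where ‖1_I‖ is the operator norm of the 0-1 matrix with support I. -/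
/-!
Let `A` be the event that `ε e = 1` for every `e ∈ I`; it has probability `2^{-|I|} ≥ 2^{-p}`.
The terms of `X = ∑_{e ∈ E} ε_e s_i t_j` outside `I` are centred and independent of `A`, so the
average of `X` over `A` is `∑_{e ∈ I} s_i t_j`. Jensen's inequality on `A` then gives
`P(A) |∑_I s_i t_j|^p ≤ E|X|^p`, i.e. `‖X‖_p ≥ P(A)^{1/p} |∑_I s_i t_j| ≥ ½ |∑_I s_i t_j|`.
-/

open MeasureTheory ProbabilityTheory Finset

theorem abs_sum_mul_le_sum_abs {Ω ι : Type*} {ε : ι → Ω → ℝ}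
    (hval : ∀ i ω, ε i ω = 1 ∨ ε i ω = -1) (E : Finset ι) (a : ι → ℝ)
    (ω : Ω) : |∑ i ∈ E, ε i ω * a i| ≤ ∑ i ∈ E, |a i| :=
  (abs_sum_le_sum_abs _ _).trans_eq <| sum_congr rfl fun i _ => by
    rcases hval i ω with h | h <;> simp [h]

theorem abs_le_one_of_sum_sq_le_one {ι : Type*} [Fintype ι] {s : ι → ℝ} (hs : ∑ i, s i ^ 2 ≤ 1)
    (i : ι) : |s i| ≤ 1 :=
  (sq_le_one_iff_abs_le_one _).1 <|
    (single_le_sum (fun j _ => sq_nonneg (s j)) (mem_univ i)).trans hs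

section Moments

variable {Ω : Type*} [MeasurableSpace Ω] {μ : Measure Ω} {f : Ω → ℝ} {p : ℝ}

theorem measureReal_mul_abs_setAverage_rpow_le [IsFiniteMeasure μ] (hp : 1 ≤ p) {A : Set Ω}
    (hf : Integrable f μ) (hfp : Integrable (fun ω => |f ω| ^ p) μ) :
    μ.real A * |⨍ ω in A, f ω ∂μ| ^ p ≤ ∫ ω, |f ω| ^ p ∂μ := by
  have hfp0 : 0 ≤ᵐ[μ] fun ω => |f ω| ^ p := .of_forall fun ω => by positivity
  by_cases hA0 : μ A = 0
  · simpa [measureReal_def, hA0] using integral_nonneg_of_ae hfp0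
  have hjensen : (⨍ ω in A, |f ω| ∂μ) ^ p ≤ ⨍ ω in A, |f ω| ^ p ∂μ :=
    (convexOn_rpow hp).map_set_average_le ((Real.continuous_rpow_const (by linarith)).continuousOn)
      isClosed_Ici hA0 (measure_ne_top μ A) (.of_forall fun ω => abs_nonneg (f ω))
      hf.abs.integrableOn hfp.integrableOn
  have habs : |⨍ ω in A, f ω ∂μ| ≤ ⨍ ω in A, |f ω| ∂μ := by
    simp only [setAverage_eq, smul_eq_mul, abs_mul, abs_inv, abs_of_nonneg measureReal_nonneg]
    gcongr
    exact abs_integral_le_integral_abs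
  have hA0' : μ.real A ≠ 0 := (measureReal_ne_zero_iff (measure_ne_top μ A)).2 hA0
  calc μ.real A * |⨍ ω in A, f ω ∂μ| ^ p
      ≤ μ.real A * ⨍ ω in A, |f ω| ^ p ∂μ := by
        gcongr
        exact (Real.rpow_le_rpow (abs_nonneg _) habs (by linarith)).trans hjensen
    _ = ∫ ω in A, |f ω| ^ p ∂μ := by rw [setAverage_eq, smul_eq_mul, mul_inv_cancel_left₀ hA0']
    _ ≤ ∫ ω, |f ω| ^ p ∂μ := setIntegral_le_integral hfp hfp0

theorem integral_abs_rpow_rpow_le_of_abs_le [IsProbabilityMeasure μ] (hp : 0 < p) {C : ℝ}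
    (hC0 : 0 ≤ C) (hC : ∀ ω, |f ω| ≤ C) : (∫ ω, |f ω| ^ p ∂μ) ^ (1 / p) ≤ C := by
  have hint : ∫ ω, |f ω| ^ p ∂μ ≤ C ^ p := by
    simpa using integral_mono_of_nonneg (f := fun ω => |f ω| ^ p)
      (.of_forall fun ω => by positivity) (integrable_const (μ := μ) (C ^ p))
      (.of_forall fun ω => Real.rpow_le_rpow (abs_nonneg _) (hC ω) hp.le)
  calc (∫ ω, |f ω| ^ p ∂μ) ^ (1 / p)
      ≤ (C ^ p) ^ (1 / p) := by gcongr
    _ = C := by rw [one_div, Real.rpow_rpow_inv hC0 hp.ne']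

end Moments

section Rademacher

variable {Ω ι : Type*} [MeasurableSpace Ω] {μ : Measure Ω}

theorem integrable_of_eq_one_or_neg_one [IsFiniteMeasure μ] {f : Ω → ℝ} (hf : Measurable f)
    (hval : ∀ ω, f ω = 1 ∨ f ω = -1) : Integrable f μ :=
  .of_bound hf.aestronglyMeasurable 1 (.of_forall fun ω => by rcases hval ω with h | h <;> simp [h])

theorem integral_eq_zero_of_rademacher [IsProbabilityMeasure μ] {f : Ω → ℝ} (hf : Measurable f)
    (hval : ∀ ω, f ω = 1 ∨ f ω = -1) (hsym : μ {ω | f ω = 1} = 1 / 2) :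
    ∫ ω, f ω ∂μ = 0 := by
  set S := {ω | f ω = 1}
  have hS : MeasurableSet S := hf (measurableSet_singleton 1)
  have hSc : ∀ ω ∈ Sᶜ, f ω = -1 := fun ω hω => (hval ω).resolve_left hω
  have hSreal : μ.real S = 1 / 2 := by simp [measureReal_def, hsym]
  rw [← integral_add_compl hS (integrable_of_eq_one_or_neg_one hf hval),
    setIntegral_congr_fun hS (fun ω hω => hω), setIntegral_congr_fun hS.compl hSc,
    setIntegral_const, setIntegral_const,
    probReal_compl_eq_one_sub hS, hSreal]
  norm_num

variable {ε : ι → Ω → ℝ}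

theorem measureReal_biInter_preimage_one (hindep : iIndepFun ε μ)
    (hsym : ∀ i, μ {ω | ε i ω = 1} = 1 / 2) (I : Finset ι) :
    μ.real (⋂ i ∈ I, ε i ⁻¹' {1}) = (1 / 2) ^ #I := by
  rw [measureReal_def, hindep.meas_biInter fun i _ => ⟨{1}, measurableSet_singleton 1, rfl⟩]
  simp [Set.preimage, hsym]

theorem setIntegral_biInter_preimage_one_eq_zero (hmeas : ∀ i, Measurable (ε i))
    (hindep : iIndepFun ε μ) {I : Finset ι} {j : ι} (hj : j ∉ I) (hj0 : ∫ ω, ε j ω ∂μ = 0) :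
    ∫ ω in ⋂ i ∈ I, ε i ⁻¹' {1}, ε j ω ∂μ = 0 := by
  have hle : ∀ i, MeasurableSpace.comap (ε i) inferInstance ≤ ‹MeasurableSpace Ω› :=
    fun i => (hmeas i).comap_le
  have hI : Indep (⨆ i ∈ (I : Set ι), MeasurableSpace.comap (ε i) inferInstance)
      (MeasurableSpace.comap (ε j) inferInstance) μ := by
    simpa using indep_iSup_of_disjoint hle hindep.iIndep
      (S := (I : Set ι)) (T := {j}) (by simpa using hj)
  have hA : MeasurableSet[⨆ i ∈ (I : Set ι), MeasurableSpace.comap (ε i) inferInstance]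
      (⋂ i ∈ I, ε i ⁻¹' {1}) :=
    .biInter I.countable_toSet fun i hi =>
      le_iSup₂ (f := fun i (_ : i ∈ (I : Set ι)) => MeasurableSpace.comap (ε i) inferInstance)
        i hi _ ⟨{1}, measurableSet_singleton 1, rfl⟩
  have := hI.setIntegral_eq_mul (f := id) (iSup₂_le fun i _ => hle i) (hmeas j).aemeasurable hA
    aestronglyMeasurable_id
  simpa [hj0] using this

theorem setIntegral_biInter_preimage_one_sum_mul [IsProbabilityMeasure μ]
    (hmeas : ∀ i, Measurable (ε i)) (hindep : iIndepFun ε μ)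
    (hval : ∀ i ω, ε i ω = 1 ∨ ε i ω = -1)
    (hsym : ∀ i, μ {ω | ε i ω = 1} = 1 / 2) {E I : Finset ι} (hIE : I ⊆ E) (a : ι → ℝ) :
    ∫ ω in ⋂ i ∈ I, ε i ⁻¹' {1}, ∑ i ∈ E, ε i ω * a i ∂μ =
      μ.real (⋂ i ∈ I, ε i ⁻¹' {1}) * ∑ i ∈ I, a i := by
  classical
  set A := ⋂ i ∈ I, ε i ⁻¹' {1}
  have hA : MeasurableSet A :=
    .biInter I.countable_toSet fun i _ => hmeas i (measurableSet_singleton 1)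
  have hin : ∀ i ∈ I, ∫ ω in A, ε i ω ∂μ = μ.real A := fun i hi => by
    rw [setIntegral_congr_fun hA (g := fun _ => 1) fun ω hω => by
      simpa using Set.mem_iInter₂.1 hω i hi]
    simp
  rw [integral_finsetSum E fun i _ => ((integrable_of_eq_one_or_neg_one (hmeas i)
    (hval i)).mul_const _).integrableOn, ← sum_sdiff hIE, mul_sum]
  simp only [integral_mul_const]
  rw [sum_eq_zero fun i hi => by
    rw [setIntegral_biInter_preimage_one_eq_zero hmeas hindep (mem_sdiff.1 hi).2
      (integral_eq_zero_of_rademacher (hmeas i) (hval i) (hsym i)), zero_mul],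
    zero_add]
  exact sum_congr rfl fun i hi => by rw [hin i hi]

theorem abs_sum_le_two_mul_integral_abs_sum_rpow [IsProbabilityMeasure μ]
    (hmeas : ∀ i, Measurable (ε i)) (hindep : iIndepFun ε μ)
    (hval : ∀ i ω, ε i ω = 1 ∨ ε i ω = -1) (hsym : ∀ i, μ {ω | ε i ω = 1} = 1 / 2)
    {E I : Finset ι} (hIE : I ⊆ E) {p : ℝ} (hp : 1 ≤ p) (hI : (#I : ℝ) ≤ p) (a : ι → ℝ) :
    |∑ i ∈ I, a i| ≤ 2 * (∫ ω, |∑ i ∈ E, ε i ω * a i| ^ p ∂μ) ^ (1 / p) := by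
  set X := fun ω => ∑ i ∈ E, ε i ω * a i
  set A := ⋂ i ∈ I, ε i ⁻¹' {1}
  have hX : ∀ ω, |X ω| ≤ ∑ i ∈ E, |a i| := abs_sum_mul_le_sum_abs hval E a
  have hXmeas : Measurable X := measurable_sum E fun i _ => (hmeas i).mul_const _
  have hXint : Integrable X μ :=
    .of_bound hXmeas.aestronglyMeasurable _ (.of_forall fun ω => hX ω)
  have hXpint : Integrable (fun ω => |X ω| ^ p) μ :=
    .of_bound (hXmeas.abs.pow_const p).aestronglyMeasurable ((∑ i ∈ E, |a i|) ^ p)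
      (.of_forall fun ω => by
        rw [Real.norm_eq_abs, abs_of_nonneg (by positivity)]
        exact Real.rpow_le_rpow (abs_nonneg _) (hX ω) (by linarith))
  have hP : μ.real A = (1 / 2) ^ #I := measureReal_biInter_preimage_one hindep hsym I
  have hP0 : μ.real A ≠ 0 := by rw [hP]; positivity
  have havg : ⨍ ω in A, X ω ∂μ = ∑ i ∈ I, a i := by
    rw [setAverage_eq, setIntegral_biInter_preimage_one_sum_mul hmeas hindep hval hsym hIE,
      smul_eq_mul, inv_mul_cancel_left₀ hP0]
  have hjensen : μ.real A * |∑ i ∈ I, a i| ^ p ≤ ∫ ω, |X ω| ^ p ∂μ := by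
    simpa [havg] using measureReal_mul_abs_setAverage_rpow_le hp (A := A) hXint hXpint
  have hhalf : 1 / 2 ≤ μ.real A ^ (1 / p) := by
    rw [hP, ← Real.rpow_natCast, ← Real.rpow_mul (by norm_num)]
    conv_lhs => rw [← Real.rpow_one (1 / 2 : ℝ)]
    exact Real.rpow_le_rpow_of_exponent_ge (by norm_num) (by norm_num)
      (by rw [mul_one_div]; exact (div_le_one (by linarith)).2 hI)
  calc |∑ i ∈ I, a i| = 2 * (1 / 2 * |∑ i ∈ I, a i|) := by ring
    _ ≤ 2 * (μ.real A ^ (1 / p) * |∑ i ∈ I, a i|) := by gcongr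
    _ = 2 * (μ.real A * |∑ i ∈ I, a i| ^ p) ^ (1 / p) := by
      rw [Real.mul_rpow measureReal_nonneg (by positivity), one_div,
        Real.rpow_rpow_inv (abs_nonneg _) (by linarith)]
    _ ≤ 2 * (∫ ω, |X ω| ^ p ∂μ) ^ (1 / p) := by gcongr

end Rademacher

theorem stmt11
    {Ω : Type*} [MeasureSpace Ω] [IsProbabilityMeasure (ℙ : Measure Ω)]
    {n : ℕ} (E I : Finset (Fin n × Fin n)) (hIE : I ⊆ E)
    (p : ℝ) (hp : 1 ≤ p) (hI : (I.card : ℝ) ≤ p)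
    (ε : Fin n × Fin n → Ω → ℝ)
    (hmeas : ∀ q, Measurable (ε q))
    (hindep : iIndepFun ε ℙ)
    (hval : ∀ q ω, ε q ω = 1 ∨ ε q ω = -1)
    (hsym : ∀ q, ℙ {ω | ε q ω = 1} = 1 / 2) :
    (1 / 2) * sSup {y | ∃ s t : Fin n → ℝ, ∑ i, s i ^ 2 ≤ 1 ∧ ∑ j, t j ^ 2 ≤ 1 ∧
        y = |∑ e ∈ I, s e.1 * t e.2|} ≤
      sSup {x | ∃ s t : Fin n → ℝ, ∑ i, s i ^ 2 ≤ 1 ∧ ∑ j, t j ^ 2 ≤ 1 ∧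
        x = (∫ ω, |∑ e ∈ E, ε e ω * s e.1 * t e.2| ^ p) ^ (1 / p)} := by
  set T := {x | ∃ s t : Fin n → ℝ, ∑ i, s i ^ 2 ≤ 1 ∧ ∑ j, t j ^ 2 ≤ 1 ∧
    x = (∫ ω, |∑ e ∈ E, ε e ω * s e.1 * t e.2| ^ p) ^ (1 / p)}
  have hT : BddAbove T := by
    refine ⟨#E, ?_⟩
    rintro x ⟨s, t, hs, ht, rfl⟩
    refine integral_abs_rpow_rpow_le_of_abs_le (by linarith) (Nat.cast_nonneg _) fun ω => ?_
    simp_rw [mul_assoc]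
    refine (abs_sum_mul_le_sum_abs hval E _ ω).trans ?_
    simpa using sum_le_card_nsmul E (fun e => |s e.1 * t e.2|) 1 fun e _ => by
      rw [abs_mul]
      exact mul_le_one₀ (abs_le_one_of_sum_sq_le_one hs _) (abs_nonneg _)
        (abs_le_one_of_sum_sq_le_one ht _)
  have hT0 : 0 ≤ sSup T := Real.sSup_nonneg fun x ⟨_, _, _, _, hx⟩ => hx ▸ by positivity
  suffices h : sSup {y | ∃ s t : Fin n → ℝ, ∑ i, s i ^ 2 ≤ 1 ∧ ∑ j, t j ^ 2 ≤ 1 ∧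
      y = |∑ e ∈ I, s e.1 * t e.2|} ≤ 2 * sSup T by linarith
  refine Real.sSup_le (fun y ⟨s, t, hs, ht, hy⟩ => hy ▸ ?_) (by positivity)
  exact (abs_sum_le_two_mul_integral_abs_sum_rpow hmeas hindep hval hsym hIE hp hI _).trans
    (by gcongr; exact le_csSup hT ⟨s, t, hs, ht, by simp_rw [mul_assoc]⟩)
end

section
/- Monotone embedding of Rademacher graph norms in discrete tori: for any p ≥ 1 and integers k, d ≥ 1, N_{ε,p}(ℤ₂^d) ≤ N_{ε,p}(ℤ_{2k}^d) ≤ 2 N_{ε,p}(ℤ₂^d). -/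
open MeasureTheory ProbabilityTheory
open scoped Classical

/-- The discrete torus graph `ℤ_m^d`: vertices are `d`-tuples over `ZMod m`, and two
vertices are adjacent iff they differ by `±1 (mod m)` in exactly one coordinate. -/
def torus (m d : ℕ) : SimpleGraph (Fin d → ZMod m) where
  Adj x y := x ≠ y ∧ ∃ i, (y i = x i + 1 ∨ y i = x i - 1) ∧ ∀ j, j ≠ i → x j = y j
  symm := ⟨by
    rintro x y ⟨hne, i, hi, hj⟩
    refine ⟨hne.symm, i, ?_, fun j hji => (hj j hji).symm⟩
    rcases hi with h | h
    · right; rw [h]; ring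
    · left; rw [h]; ring⟩
  loopless := ⟨fun x h => h.1 rfl⟩

/-- The `L_p` Rademacher norm `N_{ε,p}(G)` of a graph `G`, with respect to a family `ε`
of random signs indexed by ordered pairs of vertices. -/
noncomputable def graphRadNorm {V : Type*} [Fintype V] {Ω : Type*} [MeasureSpace Ω]
    (G : SimpleGraph V) (ε : V × V → Ω → ℝ) (p : ℝ) : ℝ :=
  sSup {x | ∃ s t : V → ℝ, ∑ v, s v ^ 2 ≤ 1 ∧ ∑ v, t v ^ 2 ≤ 1 ∧
    x = (∫ ω, |∑ i, ∑ j, if G.Adj i j then ε (i, j) ω * s i * t j else 0| ^ p) ^ (1 / p)}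

/-!
For a Rademacher family the `L^p` norm of `∑ q, ε q * a q` is an average over sign patterns, so
`N_{ε,p}(G)` does not depend on the probability space; as a function of the coefficients `a` it
is a norm, invariant under relabelling and under adding coordinates with zero coefficient.

The cube `{0,1}^d` spans an induced copy of `ℤ₂^d` in `ℤ_n^d`, which gives the lower bound.
For the upper bound, restrict the bilinear form to all `n^d` translates `z + {0,1}^d` of the
cube. When `2 ≠ 0` in `ZMod n` every edge of `ℤ_n^d` lies in exactly `2^(d-1)` of them, so by
the triangle inequality `N(ℤ_n^d)` is at most `2^(1-d) ∑_z ‖s|_z‖ ‖t|_z‖ N(ℤ₂^d)`, and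
Cauchy–Schwarz together with `∑_z ‖s|_z‖² = 2^d ‖s‖²` bounds the sum by `2^d`.
-/

open scoped Matrix

noncomputable section

def boolSign (b : Bool) : ℝ := if b then 1 else -1

lemma boolSign_injective : Function.Injective boolSign := by
  intro a b h
  cases a <;> cases b <;> norm_num [boolSign] at h <;> rfl

structure IsRademacherFamily {ι Ω : Type*} [MeasureSpace Ω] (ε : ι → Ω → ℝ) : Prop where
  measurable : ∀ q, Measurable (ε q)
  indep : iIndepFun ε ℙ
  eq_one_or_eq_neg_one : ∀ q ω, ε q ω = 1 ∨ ε q ω = -1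
  measure_eq_one : ∀ q, ℙ {ω | ε q ω = 1} = 1 / 2

namespace IsRademacherFamily

variable {ι Ω : Type*} [MeasureSpace Ω] {ε : ι → Ω → ℝ}

lemma measure_preimage_boolSign [IsProbabilityMeasure (ℙ : Measure Ω)]
    (hε : IsRademacherFamily ε) (q : ι) (b : Bool) :
    ℙ (ε q ⁻¹' {boolSign b}) = 1 / 2 := by
  cases b
  · have hcompl : ε q ⁻¹' {boolSign false} = {ω | ε q ω = 1}ᶜ := by
      ext ω
      rcases hε.eq_one_or_eq_neg_one q ω with h | h <;> norm_num [boolSign, h]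
    rw [hcompl, prob_compl_eq_one_sub (measurableSet_eq_fun (hε.measurable q) measurable_const),
      hε.measure_eq_one, one_div, ENNReal.one_sub_inv_two]
  · exact hε.measure_eq_one q

def signPattern (ε : ι → Ω → ℝ) (ω : Ω) : ι → Bool := fun q => decide (ε q ω = 1)

lemma boolSign_signPattern (hε : IsRademacherFamily ε) (ω : Ω) (q : ι) :
    boolSign (signPattern ε ω q) = ε q ω := by
  rcases hε.eq_one_or_eq_neg_one q ω with h | h <;> norm_num [signPattern, boolSign, h]

lemma preimage_signPattern (hε : IsRademacherFamily ε) (σ : ι → Bool) :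
    signPattern ε ⁻¹' {σ} = ⋂ q, ε q ⁻¹' {boolSign (σ q)} := by
  ext ω
  simp only [Set.mem_preimage, Set.mem_singleton_iff, Set.mem_iInter, funext_iff,
    ← hε.boolSign_signPattern ω, boolSign_injective.eq_iff]

lemma measurable_signPattern [Fintype ι] (hε : IsRademacherFamily ε) : Measurable (signPattern ε) :=
  measurable_to_countable' fun σ => hε.preimage_signPattern σ ▸
    MeasurableSet.iInter fun q => hε.measurable q (measurableSet_singleton _)

lemma measure_signPattern_preimage [Fintype ι] [IsProbabilityMeasure (ℙ : Measure Ω)]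
    (hε : IsRademacherFamily ε) (σ : ι → Bool) :
    ℙ (signPattern ε ⁻¹' {σ}) = (1 / 2) ^ Fintype.card ι := by
  rw [hε.preimage_signPattern,
    hε.indep.meas_iInter fun q => ⟨{boolSign (σ q)}, measurableSet_singleton _, rfl⟩]
  simp [hε.measure_preimage_boolSign]

theorem integral_comp [Fintype ι] [IsProbabilityMeasure (ℙ : Measure Ω)]
    (hε : IsRademacherFamily ε) (G : (ι → ℝ) → ℝ) :
    ∫ ω, G (fun q => ε q ω) =
      (∑ σ : ι → Bool, G (fun q => boolSign (σ q))) / 2 ^ Fintype.card ι := by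
  simp_rw [← hε.boolSign_signPattern]
  rw [← integral_map (f := fun σ : ι → Bool => G (fun q => boolSign (σ q)))
      hε.measurable_signPattern.aemeasurable AEStronglyMeasurable.of_discrete,
    integral_fintype Integrable.of_finite, Finset.sum_div]
  refine Finset.sum_congr rfl fun σ _ => ?_
  rw [measureReal_def, Measure.map_apply hε.measurable_signPattern (measurableSet_singleton σ),
    hε.measure_signPattern_preimage]
  simp [div_eq_inv_mul]

end IsRademacherFamily

section RademacherNorm

variable {ι : Type*} [Fintype ι]

def rademacherNorm (a : ι → ℝ) (p : ℝ) : ℝ :=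
  ((∑ σ : ι → Bool, |∑ q, boolSign (σ q) * a q| ^ p) / 2 ^ Fintype.card ι) ^ (1 / p)

lemma IsRademacherFamily.rademacherNorm_eq {Ω : Type*} [MeasureSpace Ω]
    [IsProbabilityMeasure (ℙ : Measure Ω)] {ε : ι → Ω → ℝ} (hε : IsRademacherFamily ε)
    (a : ι → ℝ) (p : ℝ) :
    rademacherNorm a p = (∫ ω, |∑ q, ε q ω * a q| ^ p) ^ (1 / p) := by
  rw [hε.integral_comp fun e => |∑ q, e q * a q| ^ p, rademacherNorm]

lemma rademacherNorm_nonneg (a : ι → ℝ) (p : ℝ) : 0 ≤ rademacherNorm a p := by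
  unfold rademacherNorm
  positivity

lemma rademacherNorm_le_sum_abs {p : ℝ} (hp : 0 < p) (a : ι → ℝ) :
    rademacherNorm a p ≤ ∑ q, |a q| := by
  have hsign : ∀ σ : ι → Bool, |∑ q, boolSign (σ q) * a q| ≤ ∑ q, |a q| := fun σ =>
    (Finset.abs_sum_le_sum_abs _ _).trans_eq <| Finset.sum_congr rfl fun q _ => by
      cases σ q <;> simp [boolSign]
  have hmean : (∑ σ : ι → Bool, |∑ q, boolSign (σ q) * a q| ^ p) / 2 ^ Fintype.card ι
      ≤ (∑ q, |a q|) ^ p := by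
    rw [div_le_iff₀ (by positivity)]
    calc ∑ σ : ι → Bool, |∑ q, boolSign (σ q) * a q| ^ p
        ≤ ∑ _σ : ι → Bool, (∑ q, |a q|) ^ p :=
          Finset.sum_le_sum fun σ _ => by gcongr; exact hsign σ
      _ = (∑ q, |a q|) ^ p * 2 ^ Fintype.card ι := by simp [mul_comm]
  calc rademacherNorm a p ≤ ((∑ q, |a q|) ^ p) ^ (1 / p) := by
        unfold rademacherNorm; gcongr
    _ = ∑ q, |a q| := by
        rw [← Real.rpow_mul (by positivity), mul_one_div_cancel hp.ne', Real.rpow_one]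

def signMatrix (ι : Type*) : Matrix (ι → Bool) ι ℝ := Matrix.of fun σ q => boolSign (σ q)

lemma rademacherNorm_eq_norm {p : ℝ} (hp : 0 < p) (a : ι → ℝ) :
    rademacherNorm a p =
      ‖WithLp.toLp (ENNReal.ofReal p) (signMatrix ι *ᵥ a)‖ / (2 ^ Fintype.card ι) ^ (1 / p) := by
  rw [PiLp.norm_eq_sum (by rwa [ENNReal.toReal_ofReal hp.le]), ENNReal.toReal_ofReal hp.le,
    rademacherNorm, Real.div_rpow (by positivity) (by positivity)]
  rfl

lemma rademacherNorm_smul {p : ℝ} (hp : 1 ≤ p) (c : ℝ) (a : ι → ℝ) :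
    rademacherNorm (c • a) p = |c| * rademacherNorm a p := by
  have : Fact (1 ≤ ENNReal.ofReal p) := ⟨by simpa using hp⟩
  simp only [rademacherNorm_eq_norm (by linarith : (0 : ℝ) < p), Matrix.mulVec_smul,
    WithLp.toLp_smul, norm_smul, Real.norm_eq_abs, mul_div_assoc]

lemma rademacherNorm_sum_le {J : Type*} {p : ℝ} (hp : 1 ≤ p) (s : Finset J) (a : J → ι → ℝ) :
    rademacherNorm (∑ j ∈ s, a j) p ≤ ∑ j ∈ s, rademacherNorm (a j) p := by
  have : Fact (1 ≤ ENNReal.ofReal p) := ⟨by simpa using hp⟩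
  simp only [rademacherNorm_eq_norm (by linarith : (0 : ℝ) < p), Matrix.mulVec_sum,
    WithLp.toLp_sum, ← Finset.sum_div]
  gcongr
  exact norm_sum_le _ _

lemma rademacherNorm_comp_equiv {κ : Type*} [Fintype κ] (e : ι ≃ κ) (a : κ → ℝ) (p : ℝ) :
    rademacherNorm (a ∘ e) p = rademacherNorm a p := by
  unfold rademacherNorm
  rw [Fintype.card_congr e, ← (e.arrowCongr (Equiv.refl Bool)).sum_comp]
  congr 4 with σ
  rw [← e.sum_comp]
  simp [Equiv.arrowCongr_apply]

lemma rademacherNorm_subtype (P : ι → Prop) [DecidablePred P] {a : ι → ℝ}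
    (ha : ∀ q, ¬P q → a q = 0) (p : ℝ) :
    rademacherNorm (fun q : Subtype P => a q) p = rademacherNorm a p := by
  have hsum : ∀ σ : ι → Bool,
      ∑ q : Subtype P, boolSign (σ q) * a q = ∑ q, boolSign (σ q) * a q := fun σ => by
    rw [← Fintype.sum_subtype_add_sum_subtype P fun q => boolSign (σ q) * a q,
      eq_comm, add_eq_left]
    exact Finset.sum_eq_zero fun q _ => by rw [ha q q.2, mul_zero]
  have hcard : (2 : ℝ) ^ Fintype.card ι
      = 2 ^ Fintype.card {q // ¬P q} * 2 ^ Fintype.card (Subtype P) := by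
    rw [← pow_add, Fintype.card_subtype_compl, Nat.sub_add_cancel (Fintype.card_subtype_le P)]
  unfold rademacherNorm
  simp only [← hsum]
  rw [Fintype.sum_equiv (Equiv.piEquivPiSubtypeProd P fun _ => Bool)
      (fun σ => |∑ q : Subtype P, boolSign (σ q) * a q| ^ p)
      (fun x => |∑ q : Subtype P, boolSign (x.1 q) * a q| ^ p) fun σ => rfl,
    Fintype.sum_prod_type]
  simp only [Finset.sum_const, Finset.card_univ, Fintype.card_fun, Fintype.card_bool, nsmul_eq_mul,
    ← Finset.mul_sum, hcard, Nat.cast_pow, Nat.cast_ofNat]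
  rw [mul_div_mul_left _ _ (by positivity)]
  convert rfl

lemma rademacherNorm_comp_of_injective {κ : Type*} [Fintype κ] {Φ : κ → ι}
    (hΦ : Function.Injective Φ) {a : ι → ℝ} (ha : ∀ q ∉ Set.range Φ, a q = 0) (p : ℝ) :
    rademacherNorm (a ∘ Φ) p = rademacherNorm a p := by
  rw [← rademacherNorm_subtype (· ∈ Set.range Φ) ha]
  convert rademacherNorm_comp_equiv (Equiv.ofInjective Φ hΦ) (fun q => a q) p
  rfl

end RademacherNorm

section GraphNorm

variable {V W : Type*}

def edgeCoeff (G : SimpleGraph V) (s t : V → ℝ) (q : V × V) : ℝ :=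
  if G.Adj q.1 q.2 then s q.1 * t q.2 else 0

def graphNorm [Fintype V] (G : SimpleGraph V) (p : ℝ) : ℝ :=
  sSup {x | ∃ s t : V → ℝ, ∑ v, s v ^ 2 ≤ 1 ∧ ∑ v, t v ^ 2 ≤ 1 ∧
    x = rademacherNorm (edgeCoeff G s t) p}

lemma IsRademacherFamily.graphRadNorm_eq [Fintype V] {Ω : Type*} [MeasureSpace Ω]
    [IsProbabilityMeasure (ℙ : Measure Ω)] {ε : V × V → Ω → ℝ} (hε : IsRademacherFamily ε)
    (G : SimpleGraph V) (p : ℝ) :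
    graphRadNorm G ε p = graphNorm G p := by
  have hsum : ∀ s t : V → ℝ, ∀ ω, ∑ q, ε q ω * edgeCoeff G s t q =
      ∑ i, ∑ j, if G.Adj i j then ε (i, j) ω * s i * t j else 0 := fun s t ω => by
    simp only [Fintype.sum_prod_type, edgeCoeff, mul_ite, mul_zero, mul_assoc]
  simp only [graphRadNorm, graphNorm, hε.rademacherNorm_eq, hsum]

lemma edgeCoeff_smul (G : SimpleGraph V) (a b : ℝ) (s t : V → ℝ) :
    edgeCoeff G (a • s) (b • t) = (a * b) • edgeCoeff G s t := by
  ext q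
  by_cases h : G.Adj q.1 q.2 <;> simp [edgeCoeff, h, mul_mul_mul_comm]

lemma edgeCoeff_comp_prodMap {G : SimpleGraph V} {H : SimpleGraph W} (f : H ↪g G) (s t : V → ℝ) :
    edgeCoeff G s t ∘ Prod.map f f = edgeCoeff H (s ∘ f) (t ∘ f) := by
  ext q
  simp [edgeCoeff]

lemma abs_edgeCoeff_le_one [Fintype V] (G : SimpleGraph V) {s t : V → ℝ}
    (hs : ∑ v, s v ^ 2 ≤ 1) (ht : ∑ v, t v ^ 2 ≤ 1) (q : V × V) : |edgeCoeff G s t q| ≤ 1 := by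
  have habs : ∀ (f : V → ℝ), ∑ v, f v ^ 2 ≤ 1 → ∀ v, |f v| ≤ 1 := fun f hf v =>
    (sq_le_one_iff_abs_le_one _).mp <|
      (Finset.single_le_sum (fun w _ => sq_nonneg (f w)) (Finset.mem_univ v)).trans hf
  unfold edgeCoeff
  split_ifs
  · rw [abs_mul]
    exact mul_le_one₀ (habs s hs q.1) (abs_nonneg _) (habs t ht q.2)
  · simp

variable [Fintype V] {p : ℝ}

lemma le_graphNorm (hp : 0 < p) (G : SimpleGraph V) {s t : V → ℝ} (hs : ∑ v, s v ^ 2 ≤ 1)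
    (ht : ∑ v, t v ^ 2 ≤ 1) : rademacherNorm (edgeCoeff G s t) p ≤ graphNorm G p := by
  refine le_csSup ⟨Fintype.card (V × V), ?_⟩ ⟨s, t, hs, ht, rfl⟩
  rintro _ ⟨s, t, hs, ht, rfl⟩
  calc rademacherNorm (edgeCoeff G s t) p ≤ ∑ q, |edgeCoeff G s t q| :=
        rademacherNorm_le_sum_abs hp _
    _ ≤ ∑ _q : V × V, 1 := Finset.sum_le_sum fun q _ => abs_edgeCoeff_le_one G hs ht q
    _ = Fintype.card (V × V) := by simp

lemma graphNorm_le {G : SimpleGraph V} {C : ℝ}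
    (h : ∀ s t : V → ℝ, ∑ v, s v ^ 2 ≤ 1 → ∑ v, t v ^ 2 ≤ 1 →
      rademacherNorm (edgeCoeff G s t) p ≤ C) :
    graphNorm G p ≤ C :=
  csSup_le ⟨_, 0, 0, by simp, by simp, rfl⟩ fun _ ⟨s, t, hs, ht, hx⟩ => hx ▸ h s t hs ht

lemma graphNorm_nonneg (hp : 0 < p) (G : SimpleGraph V) : 0 ≤ graphNorm G p :=
  (rademacherNorm_nonneg _ _).trans (le_graphNorm hp G (s := 0) (t := 0) (by simp) (by simp))

lemma exists_sum_sq_le_one_and_eq_smul (s : V → ℝ) :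
    ∃ u : V → ℝ, ∑ v, u v ^ 2 ≤ 1 ∧ s = √(∑ v, s v ^ 2) • u := by
  by_cases h : ∑ v, s v ^ 2 = 0
  · refine ⟨0, by simp, ?_⟩
    ext v
    simpa using (Finset.sum_eq_zero_iff_of_nonneg fun w _ => sq_nonneg (s w)).mp h v
      (Finset.mem_univ v)
  · have hpos : 0 < √(∑ v, s v ^ 2) := Real.sqrt_pos.mpr <|
      (Finset.sum_nonneg fun w _ => sq_nonneg (s w)).lt_of_ne' h
    refine ⟨(√(∑ v, s v ^ 2))⁻¹ • s, ?_, (smul_inv_smul₀ hpos.ne' s).symm⟩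
    simp only [Pi.smul_apply, smul_eq_mul, mul_pow, ← Finset.mul_sum, inv_pow,
      Real.sq_sqrt (Finset.sum_nonneg fun w _ => sq_nonneg (s w))]
    exact inv_mul_le_one_of_le₀ le_rfl (by positivity)

lemma rademacherNorm_edgeCoeff_le (hp : 1 ≤ p) (G : SimpleGraph V) (s t : V → ℝ) :
    rademacherNorm (edgeCoeff G s t) p ≤ √(∑ v, s v ^ 2) * √(∑ v, t v ^ 2) * graphNorm G p := by
  obtain ⟨u, hu, hsu⟩ := exists_sum_sq_le_one_and_eq_smul s
  obtain ⟨w, hw, htw⟩ := exists_sum_sq_le_one_and_eq_smul t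
  calc rademacherNorm (edgeCoeff G s t) p
      = √(∑ v, s v ^ 2) * √(∑ v, t v ^ 2) * rademacherNorm (edgeCoeff G u w) p := by
        conv_lhs => rw [hsu, htw, edgeCoeff_smul, rademacherNorm_smul hp]
        rw [abs_of_nonneg (by positivity)]
    _ ≤ √(∑ v, s v ^ 2) * √(∑ v, t v ^ 2) * graphNorm G p := by
        gcongr
        exact le_graphNorm (by linarith) G hu hw

theorem graphNorm_mono_of_embedding [Fintype W] (hp : 0 < p) {G : SimpleGraph V}
    {H : SimpleGraph W} (f : H ↪g G) : graphNorm H p ≤ graphNorm G p := by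
  refine graphNorm_le fun s t hs ht => ?_
  have hzero : ∀ (g : W → ℝ), ∀ v ∉ Set.range f, Function.extend f g 0 v = 0 := fun g v hv =>
    Function.extend_apply' _ _ _ hv
  have hsum : ∀ g : W → ℝ, ∑ v, Function.extend f g 0 v ^ 2 = ∑ w, g w ^ 2 := fun g =>
    (Fintype.sum_of_injective f f.injective _ _ (fun v hv => by rw [hzero g v hv, sq, zero_mul])
      fun w => by rw [f.injective.extend_apply]).symm
  have hcomp : edgeCoeff G (Function.extend f s 0) (Function.extend f t 0) ∘ Prod.map f f =
      edgeCoeff H s t := by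
    rw [edgeCoeff_comp_prodMap, Function.extend_comp f.injective, Function.extend_comp f.injective]
  rw [← hcomp, rademacherNorm_comp_of_injective (f.injective.prodMap f.injective)]
  · exact le_graphNorm hp G (by rwa [hsum]) (by rwa [hsum])
  · rintro ⟨v, w⟩ hq
    rw [Set.range_prodMap, Set.mem_prod, not_and_or] at hq
    rcases hq with hv | hw
    · simp [edgeCoeff, hzero s v hv]
    · simp [edgeCoeff, hzero t w hw]

lemma rademacherNorm_indicator_range_le [Fintype W] (hp : 1 ≤ p) {G : SimpleGraph V}
    {H : SimpleGraph W} (f : H ↪g G) (s t : V → ℝ) :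
    rademacherNorm ((Set.range (Prod.map f f)).indicator (edgeCoeff G s t)) p ≤
      √(∑ w, s (f w) ^ 2) * √(∑ w, t (f w) ^ 2) * graphNorm H p := by
  have hcomp : (Set.range (Prod.map f f)).indicator (edgeCoeff G s t) ∘ Prod.map f f =
      edgeCoeff H (s ∘ f) (t ∘ f) := by
    rw [← edgeCoeff_comp_prodMap]
    ext q
    exact Set.indicator_of_mem (Set.mem_range_self q) _
  rw [← rademacherNorm_comp_of_injective (f.injective.prodMap f.injective)
    fun q hq => Set.indicator_of_notMem hq _, hcomp]
  exact rademacherNorm_edgeCoeff_le hp H _ _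

end GraphNorm

lemma torus_adj_iff {m d : ℕ} {x y : Fin d → ZMod m} :
    (torus m d).Adj x y ↔
      ∃ i, ((y i = x i + 1 ∨ y i = x i - 1) ∧ x i ≠ y i) ∧ ∀ j, j ≠ i → x j = y j := by
  constructor
  · rintro ⟨hne, i, hstep, hoff⟩
    refine ⟨i, ⟨hstep, fun h => hne (funext fun j => ?_)⟩, hoff⟩
    by_cases hj : j = i
    · exact hj ▸ h
    · exact hoff j hj
  · rintro ⟨i, ⟨hstep, hi⟩, hoff⟩
    exact ⟨fun h => hi (congrFun h i), i, hstep, hoff⟩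

section CommRing

variable {R : Type*} [CommRing R] [Fintype R] [DecidableEq R]

lemma card_filter_eq_or_eq_add_one (h1 : (1 : R) ≠ 0) (a : R) :
    (Finset.univ.filter fun ζ : R => a = ζ ∨ a = ζ + 1).card = 2 := by
  rw [Finset.card_eq_two]
  refine ⟨a, a - 1, fun h => h1 (by linear_combination h), ?_⟩
  ext ζ
  simp only [Finset.mem_filter, Finset.mem_univ, true_and, Finset.mem_insert,
    Finset.mem_singleton]
  constructor
  · rintro (h | h)
    · exact Or.inl h.symm
    · exact Or.inr (by linear_combination -h)
  · rintro (h | h)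
    · exact Or.inl h.symm
    · exact Or.inr (by linear_combination -h)

lemma card_filter_both_eq_or_eq_add_one (h2 : (2 : R) ≠ 0) {a b : R} (hab : b = a + 1 ∨ b = a - 1) :
    (Finset.univ.filter fun ζ : R =>
      (a = ζ ∨ a = ζ + 1) ∧ (b = ζ ∨ b = ζ + 1)).card = 1 := by
  have h1 : (1 : R) ≠ 0 := fun h => h2 (by linear_combination 2 * h)
  rw [Finset.card_eq_one]
  rcases hab with rfl | rfl
  · refine ⟨a, Finset.ext fun ζ => ?_⟩
    simp only [Finset.mem_filter, Finset.mem_univ, true_and, Finset.mem_singleton]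
    constructor
    · rintro ⟨h | h, h' | h'⟩
      · exact h.symm
      · exact h.symm
      · exact (h2 (by linear_combination h' - h)).elim
      · exact (h1 (by linear_combination h' - h)).elim
    · rintro rfl
      exact ⟨Or.inl rfl, Or.inr rfl⟩
  · refine ⟨a - 1, Finset.ext fun ζ => ?_⟩
    simp only [Finset.mem_filter, Finset.mem_univ, true_and, Finset.mem_singleton]
    constructor
    · rintro ⟨h | h, h' | h'⟩
      · exact (h1 (by linear_combination h - h')).elim
      · exact (h2 (by linear_combination h - h')).elim
      · exact h'.symm
      · exact (h1 (by linear_combination h - h')).elim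
    · rintro rfl
      exact ⟨Or.inr (by ring), Or.inl rfl⟩

end CommRing

section Cubes

variable {n d : ℕ}

/-- The cube `z + {0,1}^d`, a copy of `ℤ₂^d` inside `ℤ_n^d`. -/
def cubeMap (z : Fin d → ZMod n) (u : Fin d → ZMod 2) : Fin d → ZMod n :=
  z + fun m => ((u m).val : ZMod n)

lemma zmod_two_eq_zero_or_eq_one : ∀ a : ZMod 2, a = 0 ∨ a = 1 := by decide

lemma zmod_two_val_cast_injective [Nontrivial (ZMod n)] :
    Function.Injective fun a : ZMod 2 => (a.val : ZMod n) := by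
  intro a b h
  rcases zmod_two_eq_zero_or_eq_one a with rfl | rfl <;>
    rcases zmod_two_eq_zero_or_eq_one b with rfl | rfl <;> simp_all [ZMod.val_one]

lemma zmod_two_val_cast_step {a b : ZMod 2} (h : a ≠ b) :
    (b.val : ZMod n) = a.val + 1 ∨ (b.val : ZMod n) = a.val - 1 := by
  rcases zmod_two_eq_zero_or_eq_one a with rfl | rfl <;>
    rcases zmod_two_eq_zero_or_eq_one b with rfl | rfl <;> simp_all [ZMod.val_one]

def cubeEmbedding [Nontrivial (ZMod n)] (z : Fin d → ZMod n) : torus 2 d ↪g torus n d where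
  toFun := cubeMap z
  inj' u v h := funext fun m => zmod_two_val_cast_injective <| by
    simpa [cubeMap] using congrFun h m
  map_rel_iff' {u v} := by
    show (torus n d).Adj (cubeMap z u) (cubeMap z v) ↔ _
    simp only [torus_adj_iff, cubeMap, Pi.add_apply, add_assoc,
      add_sub_assoc, add_right_inj, ne_eq, zmod_two_val_cast_injective.eq_iff]
    refine exists_congr fun i => and_congr_left fun _ => and_congr_left fun hne =>
      iff_of_true (zmod_two_val_cast_step hne) (by simpa using zmod_two_val_cast_step (n := 2) hne)

lemma mem_range_cubeMap {z x : Fin d → ZMod n} :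
    x ∈ Set.range (cubeMap z) ↔ ∀ m, x m = z m ∨ x m = z m + 1 := by
  constructor
  · rintro ⟨u, rfl⟩ m
    rcases zmod_two_eq_zero_or_eq_one (u m) with h | h <;>
      simp only [cubeMap, Pi.add_apply, h, ZMod.val_zero, ZMod.val_one, Nat.cast_zero,
        Nat.cast_one, add_zero, true_or, or_true]
  · intro hx
    refine ⟨fun m => if x m = z m then 0 else 1, funext fun m => ?_⟩
    by_cases h : x m = z m
    · simp only [cubeMap, Pi.add_apply, h, if_true, ZMod.val_zero, Nat.cast_zero, add_zero]
    · simp only [cubeMap, Pi.add_apply, if_neg h, ZMod.val_one, Nat.cast_one]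
      exact ((hx m).resolve_left h).symm

lemma sum_sum_cubeMap [NeZero n] (g : (Fin d → ZMod n) → ℝ) :
    ∑ z, ∑ u, g (cubeMap z u) = 2 ^ d * ∑ x, g x := by
  have htranslate : ∀ w, ∑ z, g (z + w) = ∑ x, g x := fun w => Equiv.sum_comp (Equiv.addRight w) g
  rw [Finset.sum_comm]
  simp only [cubeMap, htranslate]
  simp [ZMod.card]

lemma card_filter_mem_range_cubeMap [NeZero n] (h2 : (2 : ZMod n) ≠ 0)
    {i j : Fin d → ZMod n} (hij : (torus n d).Adj i j) :
    (Finset.univ.filter fun z => i ∈ Set.range (cubeMap z) ∧ j ∈ Set.range (cubeMap z)).card =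
      2 ^ (d - 1) := by
  obtain ⟨c, ⟨hstep, -⟩, hoff⟩ := torus_adj_iff.mp hij
  have hfilter : (Finset.univ.filter fun z => i ∈ Set.range (cubeMap z) ∧
      j ∈ Set.range (cubeMap z)) = Fintype.piFinset fun m =>
        Finset.univ.filter fun ζ => (i m = ζ ∨ i m = ζ + 1) ∧ (j m = ζ ∨ j m = ζ + 1) := by
    ext z
    simp only [Finset.mem_filter, Finset.mem_univ, true_and, Fintype.mem_piFinset,
      mem_range_cubeMap, forall_and]
  have hone : (1 : ZMod n) ≠ 0 := fun h => h2 (by linear_combination 2 * h)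
  have hoffc : ∀ m ∈ Finset.univ.erase c, (Finset.univ.filter fun ζ =>
      (i m = ζ ∨ i m = ζ + 1) ∧ (j m = ζ ∨ j m = ζ + 1)).card = 2 := fun m hm => by
    simp only [← hoff m (Finset.ne_of_mem_erase hm), and_self]
    exact card_filter_eq_or_eq_add_one hone _
  rw [hfilter, Fintype.card_piFinset, ← Finset.mul_prod_erase _ _ (Finset.mem_univ c),
    card_filter_both_eq_or_eq_add_one h2 hstep, one_mul, Finset.prod_congr rfl hoffc,
    Finset.prod_const, Finset.card_erase_of_mem (Finset.mem_univ c), Finset.card_univ,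
    Fintype.card_fin]

lemma sum_indicator_range_cubeMap [NeZero n] (h2 : (2 : ZMod n) ≠ 0)
    (s t : (Fin d → ZMod n) → ℝ) :
    ∑ z, (Set.range (Prod.map (cubeMap z) (cubeMap z))).indicator (edgeCoeff (torus n d) s t) =
      (2 ^ (d - 1) : ℝ) • edgeCoeff (torus n d) s t := by
  ext ⟨i, j⟩
  rw [Finset.sum_apply, Finset.sum_indicator_eq_sum_filter, Finset.sum_const, Pi.smul_apply]
  by_cases hij : (torus n d).Adj i j
  · simp only [Set.range_prodMap, Set.mem_prod]
    rw [card_filter_mem_range_cubeMap h2 hij]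
    simp
  · simp [edgeCoeff, hij]

lemma sum_sqrt_mul_sqrt_cubeMap_le [NeZero n] {s t : (Fin d → ZMod n) → ℝ}
    (hs : ∑ x, s x ^ 2 ≤ 1) (ht : ∑ x, t x ^ 2 ≤ 1) :
    ∑ z, √(∑ u, s (cubeMap z u) ^ 2) * √(∑ u, t (cubeMap z u) ^ 2) ≤ 2 ^ d := by
  calc _ ≤ √(∑ z, ∑ u, s (cubeMap z u) ^ 2) * √(∑ z, ∑ u, t (cubeMap z u) ^ 2) :=
        Real.sum_sqrt_mul_sqrt_le _ (fun z => by positivity) (fun z => by positivity)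
    _ ≤ √(2 ^ d) * √(2 ^ d) := by
        rw [sum_sum_cubeMap fun x => s x ^ 2, sum_sum_cubeMap fun x => t x ^ 2]
        gcongr <;> exact mul_le_of_le_one_right (by positivity) ‹_›
    _ = 2 ^ d := Real.mul_self_sqrt (by positivity)

theorem graphNorm_torus_le_two_mul [NeZero n] (h2 : (2 : ZMod n) ≠ 0) {p : ℝ}
    (hp : 1 ≤ p) : graphNorm (torus n d) p ≤ 2 * graphNorm (torus 2 d) p := by
  have : Nontrivial (ZMod n) := nontrivial_of_ne 2 0 h2
  set N := graphNorm (torus 2 d) p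
  have hN : 0 ≤ N := graphNorm_nonneg (by linarith) _
  have hpow : (2 : ℝ) ^ d ≤ 2 * 2 ^ (d - 1) := by
    rw [← pow_succ']
    exact pow_le_pow_right₀ one_le_two (by omega)
  refine graphNorm_le fun s t hs ht => ?_
  set block := fun z : Fin d → ZMod n =>
    (Set.range (Prod.map (cubeMap z) (cubeMap z))).indicator (edgeCoeff (torus n d) s t)
  calc rademacherNorm (edgeCoeff (torus n d) s t) p
      = (2 ^ (d - 1))⁻¹ * rademacherNorm (∑ z, block z) p := by
        rw [sum_indicator_range_cubeMap h2, rademacherNorm_smul hp, abs_of_pos (by positivity),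
          inv_mul_cancel_left₀ (by positivity)]
    _ ≤ (2 ^ (d - 1))⁻¹ * ∑ z, √(∑ u, s (cubeMap z u) ^ 2) * √(∑ u, t (cubeMap z u) ^ 2) * N := by
        gcongr
        refine (rademacherNorm_sum_le hp _ _).trans (Finset.sum_le_sum fun z _ => ?_)
        exact rademacherNorm_indicator_range_le hp (cubeEmbedding z) s t
    _ ≤ (2 ^ (d - 1))⁻¹ * (2 ^ d * N) := by
        rw [← Finset.sum_mul]
        gcongr
        exact sum_sqrt_mul_sqrt_cubeMap_le hs ht
    _ ≤ 2 * N := by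
        rw [inv_mul_le_iff₀ (by positivity)]
        nlinarith

end Cubes

end

theorem stmt16_general
    {Ω₁ : Type*} [MeasureSpace Ω₁] [IsProbabilityMeasure (ℙ : Measure Ω₁)]
    {Ω₂ : Type*} [MeasureSpace Ω₂] [IsProbabilityMeasure (ℙ : Measure Ω₂)]
    (k d : ℕ) [NeZero (2 * k)]
    (ε₁ : ((Fin d → ZMod 2) × (Fin d → ZMod 2)) → Ω₁ → ℝ)
    (hmeas₁ : ∀ q, Measurable (ε₁ q))
    (hindep₁ : iIndepFun ε₁ ℙ)
    (hval₁ : ∀ q ω, ε₁ q ω = 1 ∨ ε₁ q ω = -1)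
    (hsym₁ : ∀ q, ℙ {ω | ε₁ q ω = 1} = 1 / 2)
    (ε₂ : ((Fin d → ZMod (2 * k)) × (Fin d → ZMod (2 * k))) → Ω₂ → ℝ)
    (hmeas₂ : ∀ q, Measurable (ε₂ q))
    (hindep₂ : iIndepFun ε₂ ℙ)
    (hval₂ : ∀ q ω, ε₂ q ω = 1 ∨ ε₂ q ω = -1)
    (hsym₂ : ∀ q, ℙ {ω | ε₂ q ω = 1} = 1 / 2)
    (p : ℝ) (hp : 1 ≤ p) :
    graphRadNorm (torus 2 d) ε₁ p ≤ graphRadNorm (torus (2 * k) d) ε₂ p ∧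
      graphRadNorm (torus (2 * k) d) ε₂ p ≤ 2 * graphRadNorm (torus 2 d) ε₁ p := by
  have : Nontrivial (ZMod (2 * k)) := ZMod.nontrivial_iff.mpr (by omega)
  rw [IsRademacherFamily.graphRadNorm_eq ⟨hmeas₁, hindep₁, hval₁, hsym₁⟩,
    IsRademacherFamily.graphRadNorm_eq ⟨hmeas₂, hindep₂, hval₂, hsym₂⟩]
  refine ⟨graphNorm_mono_of_embedding (by linarith) (cubeEmbedding 0), ?_⟩
  rcases eq_or_ne k 1 with rfl | hk1
  · linarith [graphNorm_nonneg (by linarith) (torus 2 d) (p := p)]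
  · refine graphNorm_torus_le_two_mul (fun h => ?_) hp
    have h2k : 2 * k ∣ 2 := (ZMod.natCast_eq_zero_iff 2 (2 * k)).mp (by exact_mod_cast h)
    have := Nat.le_of_dvd two_pos h2k
    have hk : k ≠ 0 := by simpa using NeZero.ne (2 * k)
    omega

theorem stmt16
    {Ω₁ : Type*} [MeasureSpace Ω₁] [IsProbabilityMeasure (ℙ : Measure Ω₁)]
    {Ω₂ : Type*} [MeasureSpace Ω₂] [IsProbabilityMeasure (ℙ : Measure Ω₂)]
    (k d : ℕ) (hk : 1 ≤ k) (hd : 1 ≤ d) [NeZero (2 * k)]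
    (ε₁ : ((Fin d → ZMod 2) × (Fin d → ZMod 2)) → Ω₁ → ℝ)
    (hmeas₁ : ∀ q, Measurable (ε₁ q))
    (hindep₁ : iIndepFun ε₁ ℙ)
    (hval₁ : ∀ q ω, ε₁ q ω = 1 ∨ ε₁ q ω = -1)
    (hsym₁ : ∀ q, ℙ {ω | ε₁ q ω = 1} = 1 / 2)
    (ε₂ : ((Fin d → ZMod (2 * k)) × (Fin d → ZMod (2 * k))) → Ω₂ → ℝ)
    (hmeas₂ : ∀ q, Measurable (ε₂ q))
    (hindep₂ : iIndepFun ε₂ ℙ)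
    (hval₂ : ∀ q ω, ε₂ q ω = 1 ∨ ε₂ q ω = -1)
    (hsym₂ : ∀ q, ℙ {ω | ε₂ q ω = 1} = 1 / 2)
    (p : ℝ) (hp : 1 ≤ p) :
    graphRadNorm (torus 2 d) ε₁ p ≤ graphRadNorm (torus (2 * k) d) ε₂ p ∧
      graphRadNorm (torus (2 * k) d) ε₂ p ≤ 2 * graphRadNorm (torus 2 d) ε₁ p :=
  stmt16_general k d ε₁ hmeas₁ hindep₁ hval₁ hsym₁ ε₂ hmeas₂ hindep₂ hval₂ hsym₂ p hp
end

section
/- Upper bound by sparsity: let G = (V,E) be a graph (ordered edges) with maximum vertex degree d, and let M = sup over nonempty I ⊆ V of min{p, |E ∩ (I×I)|}/|I|. Then for any E₁ ⊆ E with |E₁| ≤ p and any unit vectors s, t, Σ_{(i,j)∈E₁} |s_i t_j| ≤ C √(dM) for a universal constant C. -/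
/-!
Put `λ = √(M / d)`. An edge `(i, j)` with `|t j| ≤ λ |s i|` contributes at most `λ s_i²`, and
since every vertex lies on at most `d` edges these contributions sum to at most `λ d`; the edges
with `|s i| ≤ λ |t j|` are symmetric. Every other edge joins dyadic level sets `I_k(s)` and
`I_l(t)` whose scales agree up to the factor `2 / λ`. There are at most `M (|I_k(s)| + |I_l(t)|)`
edges between two level sets, so for fixed `k` the sum over the admissible `l` is a geometric
series, and what remains is `(M / λ) ∑_k |I_k(s)| 4^{-k} = O(M / λ)`. Both bounds are `O(√(d M))`.
-/

open scoped Classical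
open Finset

/-- The paper's dyadic level set `I_k(u)` is `levelSet u (1 - k)`. -/
noncomputable def levelSet {V : Type*} [Fintype V] (u : V → ℝ) (k : ℤ) : Finset V :=
  univ.filter fun i => (2 : ℝ) ^ (k - 1) < |u i| ∧ |u i| ≤ 2 ^ k

section LevelSet

variable {V : Type*} [Fintype V] {u : V → ℝ} {i : V} {k : ℤ}

lemma mem_levelSet_clog (hi : u i ≠ 0) : i ∈ levelSet u (Int.clog 2 |u i|) := by
  have lower := Int.zpow_pred_clog_lt_self (R := ℝ) one_lt_two (abs_pos.2 hi)
  have upper := Int.self_le_zpow_clog (R := ℝ) one_lt_two |u i|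
  push_cast at lower upper
  simpa [levelSet] using ⟨lower, upper⟩

lemma abs_le_of_mem_levelSet (hi : i ∈ levelSet u k) : |u i| ≤ 2 ^ k :=
  (mem_filter.1 hi).2.2

lemma zpow_lt_two_mul_abs_of_mem_levelSet (hi : i ∈ levelSet u k) : (2 : ℝ) ^ k < 2 * |u i| := by
  have := (mem_filter.1 hi).2.1
  rw [zpow_sub_one₀ two_ne_zero] at this
  linarith

lemma disjoint_levelSet {l : ℤ} (hkl : k ≠ l) : Disjoint (levelSet u k) (levelSet u l) := by
  refine disjoint_left.2 fun i hk hl => hkl ?_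
  simp only [levelSet, mem_filter, mem_univ, true_and] at hk hl
  have h₁ : k - 1 < l := (zpow_lt_zpow_iff_right₀ one_lt_two).1 (hk.1.trans_le hl.2)
  have h₂ : l - 1 < k := (zpow_lt_zpow_iff_right₀ one_lt_two).1 (hl.1.trans_le hk.2)
  omega

lemma sum_card_levelSet_mul_sq_le (K : Finset ℤ) :
    ∑ k ∈ K, (#(levelSet u k) : ℝ) * ((2 : ℝ) ^ k) ^ 2 ≤ 4 * ∑ i, u i ^ 2 := by
  calc ∑ k ∈ K, (#(levelSet u k) : ℝ) * ((2 : ℝ) ^ k) ^ 2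
      = ∑ k ∈ K, ∑ i ∈ levelSet u k, ((2 : ℝ) ^ k) ^ 2 := by simp
    _ ≤ ∑ k ∈ K, ∑ i ∈ levelSet u k, 4 * u i ^ 2 := by
        gcongr with k _ i hi
        have := zpow_lt_two_mul_abs_of_mem_levelSet hi
        nlinarith [sq_abs (u i), zpow_pos (two_pos (α := ℝ)) k]
    _ = ∑ i ∈ K.biUnion (levelSet u), 4 * u i ^ 2 :=
        (sum_biUnion fun _ _ _ _ hkl => disjoint_levelSet hkl).symm
    _ ≤ ∑ i, 4 * u i ^ 2 :=
        sum_le_sum_of_subset_of_nonneg (subset_univ _) fun _ _ _ => by positivity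
    _ = 4 * ∑ i, u i ^ 2 := (mul_sum ..).symm

end LevelSet

lemma sum_zpow_two_lt {S : Finset ℤ} {a : ℤ} (h : ∀ l ∈ S, l < a) :
    ∑ l ∈ S, (2 : ℝ) ^ l < 2 ^ a := by
  induction S using Finset.induction_on_max generalizing a with
  | empty => simp only [sum_empty]; positivity
  | insert b S hb ih =>
    have hba : b < a := h b (mem_insert_self b S)
    rw [sum_insert fun hbS => (hb b hbS).false]
    calc (2 : ℝ) ^ b + ∑ l ∈ S, (2 : ℝ) ^ l < 2 ^ b + 2 ^ b := by gcongr; exact ih hb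
      _ = 2 ^ (b + 1) := by rw [zpow_add_one₀ two_ne_zero]; ring
      _ ≤ 2 ^ a := zpow_le_zpow_right₀ one_le_two (by omega)

lemma sum_zpow_two_le_two_mul {S : Finset ℤ} {c : ℝ} (hc : 0 ≤ c)
    (h : ∀ l ∈ S, (2 : ℝ) ^ l ≤ c) : ∑ l ∈ S, (2 : ℝ) ^ l ≤ 2 * c := by
  rcases S.eq_empty_or_nonempty with rfl | hS
  · simpa using hc
  calc ∑ l ∈ S, (2 : ℝ) ^ l ≤ 2 ^ (S.max' hS + 1) :=
        (sum_zpow_two_lt fun l hl => Int.lt_add_one_iff.2 (S.le_max' l hl)).le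
    _ = 2 * 2 ^ S.max' hS := by rw [zpow_add_one₀ two_ne_zero]; ring
    _ ≤ 2 * c := by gcongr; exact h _ (S.max'_mem hS)

lemma sum_mul_zpow_mul_zpow_le (P : Finset (ℤ × ℤ)) (n : ℤ → ℝ) (hn : ∀ k, 0 ≤ n k) {c : ℝ}
    (hc : 0 ≤ c) (hP : ∀ p ∈ P, (2 : ℝ) ^ p.2 ≤ c * 2 ^ p.1) :
    ∑ p ∈ P, n p.1 * (2 ^ p.1 * 2 ^ p.2)
      ≤ 2 * c * ∑ k ∈ P.image Prod.fst, n k * ((2 : ℝ) ^ k) ^ 2 := by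
  rw [sum_finset_product' P (P.image Prod.fst) (fun k => (P.filter (·.1 = k)).image Prod.snd)
    (f := fun k l => n k * ((2 : ℝ) ^ k * 2 ^ l)) (by aesop), mul_sum]
  gcongr with k hk
  have hrow : ∑ l ∈ (P.filter (·.1 = k)).image Prod.snd, (2 : ℝ) ^ l ≤ 2 * (c * 2 ^ k) := by
    refine sum_zpow_two_le_two_mul (mul_nonneg hc (by positivity)) fun l hl => ?_
    obtain ⟨p, hp, rfl⟩ := mem_image.1 hl
    rw [mem_filter] at hp
    exact hp.2 ▸ hP p hp.1
  calc ∑ l ∈ (P.filter (·.1 = k)).image Prod.snd, n k * ((2 : ℝ) ^ k * 2 ^ l)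
      = n k * 2 ^ k * ∑ l ∈ (P.filter (·.1 = k)).image Prod.snd, (2 : ℝ) ^ l := by
        rw [mul_sum]; simp only [mul_assoc]
    _ ≤ n k * 2 ^ k * (2 * (c * 2 ^ k)) :=
        mul_le_mul_of_nonneg_left hrow (mul_nonneg (hn k) (by positivity))
    _ = 2 * c * (n k * ((2 : ℝ) ^ k) ^ 2) := by ring

lemma sum_filter_abs_mul_le {α : Type*} (E : Finset α) (u w : α → ℝ) {c : ℝ} (hc : 0 ≤ c) :
    ∑ a ∈ E.filter (fun a => |w a| ≤ c * |u a|), |u a * w a| ≤ c * ∑ a ∈ E, u a ^ 2 := by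
  calc ∑ a ∈ E.filter (fun a => |w a| ≤ c * |u a|), |u a * w a|
      ≤ ∑ a ∈ E.filter (fun a => |w a| ≤ c * |u a|), c * u a ^ 2 := by
        refine sum_le_sum fun a ha => ?_
        rw [abs_mul, ← sq_abs (u a), sq, mul_left_comm]
        exact mul_le_mul_of_nonneg_left (mem_filter.1 ha).2 (abs_nonneg _)
    _ ≤ ∑ a ∈ E, c * u a ^ 2 :=
        sum_le_sum_of_subset_of_nonneg (filter_subset _ _) fun _ _ _ => by positivity
    _ = c * ∑ a ∈ E, u a ^ 2 := (mul_sum ..).symm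

lemma sum_comp_le_mul_sum {α β : Type*} [Fintype β] (E : Finset α) (f : α → β) (w : β → ℝ)
    (hw : ∀ b, 0 ≤ w b) {d : ℝ} (hfib : ∀ b, (#(E.filter (f · = b)) : ℝ) ≤ d) :
    ∑ a ∈ E, w (f a) ≤ d * ∑ b, w b := by
  calc ∑ a ∈ E, w (f a) = ∑ b, ∑ a ∈ E.filter (f · = b), w (f a) := (sum_fiberwise E f _).symm
    _ = ∑ b, (#(E.filter (f · = b)) : ℝ) * w b := by
        refine sum_congr rfl fun b _ => ?_
        rw [sum_congr rfl fun a ha => by rw [(mem_filter.1 ha).2], sum_const, nsmul_eq_mul]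
    _ ≤ ∑ b, d * w b := by gcongr with b; exacts [hw b, hfib b]
    _ = d * ∑ b, w b := (mul_sum ..).symm

section Bilinear

variable {V : Type*} [Fintype V] (E : Finset (V × V)) (s t : V → ℝ)

lemma sum_card_levelSet_add_mul_le (P : Finset (ℤ × ℤ)) {c : ℝ} (hc : 0 ≤ c)
    (hP : ∀ p ∈ P, (2 : ℝ) ^ p.2 ≤ c * 2 ^ p.1 ∧ (2 : ℝ) ^ p.1 ≤ c * 2 ^ p.2) :
    ∑ p ∈ P, (#(levelSet s p.1) + #(levelSet t p.2) : ℝ) * (2 ^ p.1 * 2 ^ p.2)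
      ≤ 8 * c * (∑ i, s i ^ 2 + ∑ j, t j ^ 2) := by
  have hs_part : ∑ p ∈ P, (#(levelSet s p.1) : ℝ) * (2 ^ p.1 * 2 ^ p.2)
      ≤ 2 * c * (4 * ∑ i, s i ^ 2) :=
    (sum_mul_zpow_mul_zpow_le P _ (fun _ => Nat.cast_nonneg _) hc fun p hp => (hP p hp).1).trans
      (mul_le_mul_of_nonneg_left (sum_card_levelSet_mul_sq_le _) (by positivity))
  have hP_swap : ∀ q ∈ P.image Prod.swap, (2 : ℝ) ^ q.2 ≤ c * 2 ^ q.1 := by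
    intro q hq
    obtain ⟨p, hp, rfl⟩ := mem_image.1 hq
    exact (hP p hp).2
  have ht_part : ∑ p ∈ P, (#(levelSet t p.2) : ℝ) * (2 ^ p.1 * 2 ^ p.2)
      ≤ 2 * c * (4 * ∑ j, t j ^ 2) :=
    calc ∑ p ∈ P, (#(levelSet t p.2) : ℝ) * (2 ^ p.1 * 2 ^ p.2)
        = ∑ q ∈ P.image Prod.swap, (#(levelSet t q.1) : ℝ) * (2 ^ q.1 * 2 ^ q.2) := by
          rw [sum_image Prod.swap_injective.injOn]
          exact sum_congr rfl fun p _ => by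
            rw [Prod.fst_swap, Prod.snd_swap, mul_comm (2 ^ p.1 : ℝ)]
      _ ≤ 2 * c * (4 * ∑ j, t j ^ 2) :=
          (sum_mul_zpow_mul_zpow_le _ _ (fun _ => Nat.cast_nonneg _) hc hP_swap).trans
            (mul_le_mul_of_nonneg_left (sum_card_levelSet_mul_sq_le _) (by positivity))
  simp only [add_mul, sum_add_distrib]
  linarith

lemma sum_filter_mem_levelSet_le {M : ℝ}
    (hcount : ∀ A B : Finset V, (#(E.filter fun e => e.1 ∈ A ∧ e.2 ∈ B) : ℝ) ≤ M * (#A + #B))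
    (k l : ℤ) :
    ∑ e ∈ E.filter (fun e => e.1 ∈ levelSet s k ∧ e.2 ∈ levelSet t l), |s e.1 * t e.2|
      ≤ M * ((#(levelSet s k) + #(levelSet t l)) * (2 ^ k * 2 ^ l)) := by
  calc ∑ e ∈ E.filter (fun e => e.1 ∈ levelSet s k ∧ e.2 ∈ levelSet t l), |s e.1 * t e.2|
      ≤ #(E.filter fun e => e.1 ∈ levelSet s k ∧ e.2 ∈ levelSet t l) • ((2 : ℝ) ^ k * 2 ^ l) := by
        refine sum_le_card_nsmul _ _ _ fun e he => ?_
        obtain ⟨-, hk, hl⟩ := mem_filter.1 he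
        rw [abs_mul]
        exact mul_le_mul (abs_le_of_mem_levelSet hk) (abs_le_of_mem_levelSet hl) (abs_nonneg _)
          (by positivity)
    _ ≤ M * ((#(levelSet s k) + #(levelSet t l)) * (2 ^ k * 2 ^ l)) := by
        rw [nsmul_eq_mul, ← mul_assoc M]
        gcongr
        exact hcount _ _

lemma sum_abs_mul_le_of_band {M lam : ℝ} (hM : 0 ≤ M) (hlam : 0 < lam)
    (hcount : ∀ A B : Finset V, (#(E.filter fun e => e.1 ∈ A ∧ e.2 ∈ B) : ℝ) ≤ M * (#A + #B))
    (hband : ∀ e ∈ E, lam * |s e.1| < |t e.2| ∧ lam * |t e.2| < |s e.1|) :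
    ∑ e ∈ E, |s e.1 * t e.2| ≤ 16 * M * (∑ i, s i ^ 2 + ∑ j, t j ^ 2) / lam := by
  set κ : V × V → ℤ × ℤ := fun e => (Int.clog 2 |s e.1|, Int.clog 2 |t e.2|)
  set P := E.image κ
  have hmem : ∀ e ∈ E, e.1 ∈ levelSet s (κ e).1 ∧ e.2 ∈ levelSet t (κ e).2 := fun e he =>
    have ht : 0 < |t e.2| := (mul_nonneg hlam.le (abs_nonneg _)).trans_lt (hband e he).1
    have hs : 0 < |s e.1| := (mul_nonneg hlam.le (abs_nonneg _)).trans_lt (hband e he).2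
    ⟨mem_levelSet_clog (abs_pos.1 hs), mem_levelSet_clog (abs_pos.1 ht)⟩
  have hfiber : ∀ p ∈ P, ∑ e ∈ E.filter (κ · = p), |s e.1 * t e.2|
      ≤ M * ((#(levelSet s p.1) + #(levelSet t p.2)) * (2 ^ p.1 * 2 ^ p.2)) := by
    refine fun p _ => le_trans (sum_le_sum_of_subset_of_nonneg (fun e he => ?_)
      fun _ _ _ => abs_nonneg _) (sum_filter_mem_levelSet_le E s t hcount p.1 p.2)
    obtain ⟨heE, rfl⟩ := mem_filter.1 he
    exact mem_filter.2 ⟨heE, hmem e heE⟩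
  have hbandP :
      ∀ p ∈ P, (2 : ℝ) ^ p.2 ≤ 2 / lam * 2 ^ p.1 ∧ (2 : ℝ) ^ p.1 ≤ 2 / lam * 2 ^ p.2 := by
    intro p hp
    obtain ⟨e, he, rfl⟩ := mem_image.1 hp
    have hs := zpow_lt_two_mul_abs_of_mem_levelSet (hmem e he).1
    have ht := zpow_lt_two_mul_abs_of_mem_levelSet (hmem e he).2
    have hs' := abs_le_of_mem_levelSet (hmem e he).1
    have ht' := abs_le_of_mem_levelSet (hmem e he).2
    constructor <;> rw [div_mul_eq_mul_div, le_div_iff₀ hlam] <;> nlinarith [hband e he]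
  calc ∑ e ∈ E, |s e.1 * t e.2| = ∑ p ∈ P, ∑ e ∈ E.filter (κ · = p), |s e.1 * t e.2| :=
        (sum_fiberwise_of_maps_to (fun e he => mem_image_of_mem κ he) _).symm
    _ ≤ ∑ p ∈ P, M * ((#(levelSet s p.1) + #(levelSet t p.2)) * (2 ^ p.1 * 2 ^ p.2)) :=
        sum_le_sum hfiber
    _ ≤ M * (8 * (2 / lam) * (∑ i, s i ^ 2 + ∑ j, t j ^ 2)) := by
        rw [← mul_sum]
        exact mul_le_mul_of_nonneg_left
          (sum_card_levelSet_add_mul_le s t P (by positivity) hbandP) hM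
    _ = 16 * M * (∑ i, s i ^ 2 + ∑ j, t j ^ 2) / lam := by field_simp; ring

lemma sum_abs_mul_le_light_add_heavy {d M lam : ℝ} (hM : 0 ≤ M) (hlam : 0 < lam)
    (hsE : ∑ e ∈ E, s e.1 ^ 2 ≤ d) (htE : ∑ e ∈ E, t e.2 ^ 2 ≤ d)
    (hcount : ∀ A B : Finset V, (#(E.filter fun e => e.1 ∈ A ∧ e.2 ∈ B) : ℝ) ≤ M * (#A + #B)) :
    ∑ e ∈ E, |s e.1 * t e.2| ≤ 2 * lam * d + 16 * M * (∑ i, s i ^ 2 + ∑ j, t j ^ 2) / lam := by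
  have hlight_s : ∑ e ∈ E.filter (fun e => |t e.2| ≤ lam * |s e.1|), |s e.1 * t e.2| ≤ lam * d :=
    (sum_filter_abs_mul_le E (fun e => s e.1) (fun e => t e.2) hlam.le).trans
      (mul_le_mul_of_nonneg_left hsE hlam.le)
  have hlight_t : ∑ e ∈ E.filter (fun e => |s e.1| ≤ lam * |t e.2|), |s e.1 * t e.2| ≤ lam * d := by
    simp_rw [mul_comm (s _)]
    exact (sum_filter_abs_mul_le E (fun e => t e.2) (fun e => s e.1) hlam.le).trans
      (mul_le_mul_of_nonneg_left htE hlam.le)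
  have hheavy : ∑ e ∈ E.filter (fun e => lam * |s e.1| < |t e.2| ∧ lam * |t e.2| < |s e.1|),
      |s e.1 * t e.2| ≤ 16 * M * (∑ i, s i ^ 2 + ∑ j, t j ^ 2) / lam :=
    sum_abs_mul_le_of_band _ s t hM hlam
      (fun A B => (Nat.cast_le.2 (card_le_card (filter_subset_filter _ (filter_subset _ _)))).trans
        (hcount A B))
      fun e he => (mem_filter.1 he).2
  have hsplit : ∑ e ∈ E, |s e.1 * t e.2|
      ≤ ∑ e ∈ E.filter (fun e => |t e.2| ≤ lam * |s e.1|), |s e.1 * t e.2|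
        + ∑ e ∈ E.filter (fun e => |s e.1| ≤ lam * |t e.2|), |s e.1 * t e.2|
        + ∑ e ∈ E.filter (fun e => lam * |s e.1| < |t e.2| ∧ lam * |t e.2| < |s e.1|),
            |s e.1 * t e.2| := by
    simp only [sum_filter, ← sum_add_distrib]
    refine sum_le_sum fun e _ => ?_
    have := abs_nonneg (s e.1 * t e.2)
    by_cases h₁ : |t e.2| ≤ lam * |s e.1|
    · rw [if_pos h₁]; split_ifs <;> linarith
    by_cases h₂ : |s e.1| ≤ lam * |t e.2|
    · rw [if_pos h₂]; split_ifs <;> linarith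
    have h₃ : lam * |s e.1| < |t e.2| ∧ lam * |t e.2| < |s e.1| := ⟨not_le.1 h₁, not_le.1 h₂⟩
    rw [if_neg h₁, if_neg h₂, if_pos h₃]; linarith
  linarith

lemma sum_abs_mul_le_sqrt_mul {d M : ℝ} (hd : 0 < d) (hM : 0 < M)
    (hs : ∑ i, s i ^ 2 ≤ 1) (ht : ∑ j, t j ^ 2 ≤ 1)
    (hdeg_fst : ∀ v, (#(E.filter (·.1 = v)) : ℝ) ≤ d)
    (hdeg_snd : ∀ v, (#(E.filter (·.2 = v)) : ℝ) ≤ d)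
    (hcount : ∀ A B : Finset V, (#(E.filter fun e => e.1 ∈ A ∧ e.2 ∈ B) : ℝ) ≤ M * (#A + #B)) :
    ∑ e ∈ E, |s e.1 * t e.2| ≤ 34 * √(d * M) := by
  have hr : 0 < √(d * M) := Real.sqrt_pos.2 (mul_pos hd hM)
  have hr_sq : √(d * M) ^ 2 = d * M := Real.sq_sqrt (mul_pos hd hM).le
  have hsE : ∑ e ∈ E, s e.1 ^ 2 ≤ d :=
    (sum_comp_le_mul_sum E Prod.fst (s · ^ 2) (fun _ => sq_nonneg _) hdeg_fst).trans
      (mul_le_of_le_one_right hd.le hs)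
  have htE : ∑ e ∈ E, t e.2 ^ 2 ≤ d :=
    (sum_comp_le_mul_sum E Prod.snd (t · ^ 2) (fun _ => sq_nonneg _) hdeg_snd).trans
      (mul_le_of_le_one_right hd.le ht)
  -- `lam = √(M / d)` balances the light bound `2 * lam * d` against the heavy bound `32 * M / lam`.
  calc ∑ e ∈ E, |s e.1 * t e.2|
      ≤ 2 * (√(d * M) / d) * d + 16 * M * (∑ i, s i ^ 2 + ∑ j, t j ^ 2) / (√(d * M) / d) :=
        sum_abs_mul_le_light_add_heavy E s t hM.le (div_pos hr hd) hsE htE hcount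
    _ ≤ 2 * (√(d * M) / d) * d + 16 * M * (1 + 1) / (√(d * M) / d) := by gcongr
    _ = 34 * √(d * M) := by
        field_simp
        linear_combination (-32) * hr_sq

end Bilinear

namespace SimpleGraph

variable {V : Type*} (G : SimpleGraph V) {E : Finset (V × V)}

/-- The paper's `M`; the edges of `G` inside `I` are counted as ordered pairs. -/
noncomputable def sparsity (p : ℝ) : ℝ :=
  sSup {x | ∃ I : Finset V, I.Nonempty ∧
    x = min p (((I ×ˢ I).filter fun e => G.Adj e.1 e.2).card : ℝ) / I.card}

lemma min_le_sparsity_mul_card {p : ℝ} (hp : 0 ≤ p) {I : Finset V} (hI : I.Nonempty) :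
    min p (((I ×ˢ I).filter fun e => G.Adj e.1 e.2).card : ℝ) ≤ G.sparsity p * #I := by
  have hI' : (0 : ℝ) < #I := Nat.cast_pos.2 hI.card_pos
  have hbdd : BddAbove {x | ∃ I : Finset V, I.Nonempty ∧
      x = min p (((I ×ˢ I).filter fun e => G.Adj e.1 e.2).card : ℝ) / I.card} := by
    refine ⟨p, ?_⟩
    rintro _ ⟨J, hJ, rfl⟩
    exact div_le_of_le_mul₀ (Nat.cast_nonneg _) hp
      ((min_le_left _ _).trans (le_mul_of_one_le_right hp (Nat.one_le_cast.2 hJ.card_pos)))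
  rw [← div_le_iff₀ hI']
  exact le_csSup hbdd ⟨I, hI, rfl⟩

lemma card_filter_le_sparsity_mul {p : ℝ} (hp : 0 ≤ p) (hE : ∀ e ∈ E, G.Adj e.1 e.2)
    (hEp : (#E : ℝ) ≤ p) (A B : Finset V) :
    (#(E.filter fun e => e.1 ∈ A ∧ e.2 ∈ B) : ℝ) ≤ G.sparsity p * (#A + #B) := by
  rcases (A ∪ B).eq_empty_or_nonempty with hAB | hAB
  · obtain ⟨rfl, rfl⟩ := union_eq_empty.1 hAB
    simp
  have hsub : E.filter (fun e => e.1 ∈ A ∧ e.2 ∈ B)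
      ⊆ ((A ∪ B) ×ˢ (A ∪ B)).filter fun e => G.Adj e.1 e.2 := fun e he => by
    obtain ⟨heE, hA, hB⟩ := mem_filter.1 he
    exact mem_filter.2 ⟨mem_product.2 ⟨mem_union_left _ hA, mem_union_right _ hB⟩, hE e heE⟩
  have hmin : (#(E.filter fun e => e.1 ∈ A ∧ e.2 ∈ B) : ℝ)
      ≤ min p (((A ∪ B) ×ˢ (A ∪ B)).filter fun e => G.Adj e.1 e.2).card :=
    le_min ((Nat.cast_le.2 (card_filter_le _ _)).trans hEp) (Nat.cast_le.2 (card_le_card hsub))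
  have hK := G.min_le_sparsity_mul_card hp hAB
  have hM : 0 ≤ G.sparsity p :=
    nonneg_of_mul_nonneg_left ((Nat.cast_nonneg _).trans (hmin.trans hK))
      (Nat.cast_pos.2 hAB.card_pos)
  calc (#(E.filter fun e => e.1 ∈ A ∧ e.2 ∈ B) : ℝ) ≤ G.sparsity p * #(A ∪ B) := hmin.trans hK
    _ ≤ G.sparsity p * (#A + #B) := by gcongr; exact_mod_cast card_union_le A B

variable [Fintype V]

lemma card_filter_fst_eq_le_degree (hE : ∀ e ∈ E, G.Adj e.1 e.2) (v : V) :
    #(E.filter (·.1 = v)) ≤ G.degree v :=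
  card_le_card_of_injOn Prod.snd
    (fun e he => by
      obtain ⟨heE, rfl⟩ := mem_filter.1 he
      exact (G.mem_neighborFinset _ _).2 (hE e heE))
    fun a ha b hb hab => Prod.ext ((mem_filter.1 ha).2.trans (mem_filter.1 hb).2.symm) hab

lemma card_filter_snd_eq_le_degree (hE : ∀ e ∈ E, G.Adj e.1 e.2) (v : V) :
    #(E.filter (·.2 = v)) ≤ G.degree v :=
  card_le_card_of_injOn Prod.fst
    (fun e he => by
      obtain ⟨heE, rfl⟩ := mem_filter.1 he
      exact (G.mem_neighborFinset _ _).2 (hE e heE).symm)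
    fun a ha b hb hab => Prod.ext hab ((mem_filter.1 ha).2.trans (mem_filter.1 hb).2.symm)

end SimpleGraph

theorem stmt18 :
    ∃ C : ℝ, 0 < C ∧
      ∀ (V : Type) [Fintype V] (G : SimpleGraph V) (d : ℕ),
        (∀ v, G.degree v ≤ d) →
        ∀ p : ℝ, 1 ≤ p →
        ∀ M : ℝ,
          M = sSup {x | ∃ I : Finset V, I.Nonempty ∧
            x = min p (((I ×ˢ I).filter fun e => G.Adj e.1 e.2).card : ℝ) / I.card} →
        ∀ E₁ : Finset (V × V), (∀ e ∈ E₁, G.Adj e.1 e.2) → (E₁.card : ℝ) ≤ p →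
        ∀ s t : V → ℝ, ∑ v, s v ^ 2 ≤ 1 → ∑ v, t v ^ 2 ≤ 1 →
          ∑ e ∈ E₁, |s e.1 * t e.2| ≤ C * Real.sqrt (d * M) := by
  refine ⟨34, by norm_num, ?_⟩
  intro V _ G d hdeg p hp M hM E₁ hE₁ hE₁p s t hs ht
  rcases E₁.eq_empty_or_nonempty with rfl | ⟨e, he⟩
  · simp only [sum_empty]; positivity
  have hcount : ∀ A B : Finset V, (#(E₁.filter fun e => e.1 ∈ A ∧ e.2 ∈ B) : ℝ) ≤ M * (#A + #B) :=
    hM ▸ G.card_filter_le_sparsity_mul (zero_le_one.trans hp) hE₁ hE₁p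
  have hM_pos : 0 < M := by
    have h_edge : 1 ≤ #(E₁.filter fun f => f.1 ∈ ({e.1} : Finset V) ∧ f.2 ∈ ({e.2} : Finset V)) :=
      card_pos.2 ⟨e, by simp [he]⟩
    have := (Nat.one_le_cast.2 h_edge).trans (hcount {e.1} {e.2})
    simp only [card_singleton, Nat.cast_one] at this
    linarith
  have hd : (0 : ℝ) < d :=
    Nat.cast_pos.2 ((G.degree_pos_iff_exists_adj e.1).2 ⟨e.2, hE₁ e he⟩ |>.trans_le (hdeg e.1))
  exact sum_abs_mul_le_sqrt_mul E₁ s t hd hM_pos hs ht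
    (fun v => by exact_mod_cast (G.card_filter_fst_eq_le_degree hE₁ v).trans (hdeg v))
    (fun v => by exact_mod_cast (G.card_filter_snd_eq_le_degree hE₁ v).trans (hdeg v)) hcount
end

section
/- Counting edges in small rectangles: let E ⊆ [n]×[n], p ≥ 2 an integer, and M = max over I ⊆ E with |I| ≤ p of ‖1_I‖ (operator norm). Set r = p²/M². Then every rectangle R = J₁×J₂ with |J₁||J₂| < r satisfies |E ∩ R| ≤ (|J₁||J₂|)^{1/2} M < p. -/
theorem stmt19
    {n : ℕ} (E : Finset (Fin n × Fin n)) (p : ℕ) (hp : 2 ≤ p)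
    (M : ℝ)
    (hM : M = sSup {x | ∃ I : Finset (Fin n × Fin n), I ⊆ E ∧ I.card ≤ p ∧
      x = sSup {y | ∃ s t : Fin n → ℝ, ∑ i, s i ^ 2 ≤ 1 ∧ ∑ i, t i ^ 2 ≤ 1 ∧
        y = |∑ e ∈ I, s e.1 * t e.2|}})
    (J₁ J₂ : Finset (Fin n))
    (hr : ((J₁.card : ℝ) * J₂.card) < (p : ℝ) ^ 2 / M ^ 2) :
    ((E ∩ J₁ ×ˢ J₂).card : ℝ) ≤ Real.sqrt ((J₁.card : ℝ) * J₂.card) * M ∧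
      Real.sqrt ((J₁.card : ℝ) * J₂.card) * M < p := by
  have hp0 : (0:ℝ) < p := by positivity
  set inner : Finset (Fin n × Fin n) → Set ℝ := fun I =>
    {y | ∃ s t : Fin n → ℝ, ∑ i, s i ^ 2 ≤ 1 ∧ ∑ i, t i ^ 2 ≤ 1 ∧
        y = |∑ e ∈ I, s e.1 * t e.2|} with hinner
  set S : Set ℝ := {x | ∃ I : Finset (Fin n × Fin n), I ⊆ E ∧ I.card ≤ p ∧
      x = sSup (inner I)} with hS
  have hMS : M = sSup S := hM
  -- inner sets are bounded above by p
  have hinner_bdd : ∀ I : Finset (Fin n × Fin n), I.card ≤ p →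
      ∀ y ∈ inner I, y ≤ (p:ℝ) := by
    rintro I hI y ⟨s, t, hs, ht, rfl⟩
    have habs : ∀ (u : Fin n → ℝ), (∑ i, u i ^ 2 ≤ 1) → ∀ i, |u i| ≤ 1 := by
      intro u hu i
      have h1 : u i ^ 2 ≤ 1 := le_trans
        (Finset.single_le_sum (f := fun j => u j ^ 2) (fun j _ => sq_nonneg _)
          (Finset.mem_univ i)) hu
      have h2 := abs_nonneg (u i)
      nlinarith [sq_abs (u i)]
    calc |∑ e ∈ I, s e.1 * t e.2| ≤ ∑ e ∈ I, |s e.1 * t e.2| :=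
          Finset.abs_sum_le_sum_abs _ _
      _ ≤ ∑ _e ∈ I, (1:ℝ) := Finset.sum_le_sum (fun e _ => by
            rw [abs_mul]
            exact mul_le_one₀ (habs s hs e.1) (abs_nonneg _) (habs t ht e.2))
      _ = (I.card : ℝ) := by simp
      _ ≤ (p : ℝ) := by exact_mod_cast hI
  have hinner_bdd' : ∀ I : Finset (Fin n × Fin n), I.card ≤ p →
      BddAbove (inner I) := fun I hI => ⟨p, fun y hy => hinner_bdd I hI y hy⟩
  have hS_bdd : BddAbove S := by
    refine ⟨p, ?_⟩
    rintro x ⟨I, hIE, hIp, rfl⟩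
    exact Real.sSup_le (fun y hy => hinner_bdd I hIp y hy) hp0.le
  have hzero_mem : ∀ I : Finset (Fin n × Fin n), (0:ℝ) ∈ inner I := by
    intro I
    exact ⟨0, 0, by simp, by simp, by simp⟩
  have hM0 : 0 ≤ M := by
    rw [hMS]
    have h1 : (0:ℝ) ≤ sSup (inner ∅) :=
      le_csSup (hinner_bdd' ∅ (by simp)) (hzero_mem ∅)
    have h2 : sSup (inner ∅) ≤ sSup S :=
      le_csSup hS_bdd ⟨∅, by simp, by simp, rfl⟩
    linarith
  have hN0 : (0:ℝ) ≤ (J₁.card : ℝ) * J₂.card := by positivity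
  -- key lower bound
  have key : ∀ I : Finset (Fin n × Fin n), I ⊆ E → I.card ≤ p → I ⊆ J₁ ×ˢ J₂ →
      (I.card : ℝ) ≤ Real.sqrt ((J₁.card : ℝ) * J₂.card) * M := by
    intro I hIE hIp hIR
    rcases I.eq_empty_or_nonempty with rfl | hne
    · simp
      positivity
    · obtain ⟨e₀, he₀⟩ := hne
      have hJ₁ : (0:ℝ) < J₁.card := by
        have := (Finset.mem_product.1 (hIR he₀)).1
        have : J₁.Nonempty := ⟨e₀.1, this⟩
        exact_mod_cast Finset.card_pos.2 this
      have hJ₂ : (0:ℝ) < J₂.card := by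
        have := (Finset.mem_product.1 (hIR he₀)).2
        have : J₂.Nonempty := ⟨e₀.2, this⟩
        exact_mod_cast Finset.card_pos.2 this
      set c₁ := (J₁.card : ℝ)
      set c₂ := (J₂.card : ℝ)
      set s : Fin n → ℝ := fun i => if i ∈ J₁ then (Real.sqrt c₁)⁻¹ else 0 with hsdef
      set t : Fin n → ℝ := fun i => if i ∈ J₂ then (Real.sqrt c₂)⁻¹ else 0 with htdef
      have hsum : ∀ (J : Finset (Fin n)), (0:ℝ) < (J.card:ℝ) →
          ∑ i, (if i ∈ J then (Real.sqrt (J.card:ℝ))⁻¹ else 0) ^ 2 ≤ 1 := by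
        intro J hJ
        have h0 : ∀ i : Fin n, (if i ∈ J then (Real.sqrt (J.card:ℝ))⁻¹ else 0) ^ 2
            = if i ∈ J then ((Real.sqrt (J.card:ℝ))⁻¹) ^ 2 else 0 := by
          intro i; split <;> simp
        have : ∑ i, (if i ∈ J then (Real.sqrt (J.card:ℝ))⁻¹ else 0) ^ 2
            = ∑ i ∈ J, ((Real.sqrt (J.card:ℝ))⁻¹) ^ 2 := by
          rw [Finset.sum_congr rfl (fun i _ => h0 i), Finset.sum_ite_mem,
            Finset.univ_inter]
        rw [this, Finset.sum_const, nsmul_eq_mul, inv_pow,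
          Real.sq_sqrt (by positivity : (0:ℝ) ≤ (J.card:ℝ)), mul_inv_cancel₀ hJ.ne']
      have hsumI : ∑ e ∈ I, s e.1 * t e.2
          = (I.card : ℝ) * ((Real.sqrt (c₁ * c₂))⁻¹) := by
        have : ∀ e ∈ I, s e.1 * t e.2 = (Real.sqrt c₁)⁻¹ * (Real.sqrt c₂)⁻¹ := by
          intro e he
          have h := Finset.mem_product.1 (hIR he)
          simp only [hsdef, htdef, if_pos h.1, if_pos h.2]
        rw [Finset.sum_congr rfl this, Finset.sum_const, nsmul_eq_mul,
          Real.sqrt_mul hJ₁.le, mul_inv]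
      have hy : (I.card : ℝ) * ((Real.sqrt (c₁ * c₂))⁻¹) ∈ inner I := by
        refine ⟨s, t, hsum J₁ hJ₁, hsum J₂ hJ₂, ?_⟩
        rw [hsumI, abs_of_nonneg (mul_nonneg (Nat.cast_nonneg _) (inv_nonneg.2 (Real.sqrt_nonneg _)))]
      have h1 : (I.card : ℝ) * ((Real.sqrt (c₁ * c₂))⁻¹) ≤ sSup (inner I) :=
        le_csSup (hinner_bdd' I hIp) hy
      have h2 : sSup (inner I) ≤ M := by
        rw [hMS]; exact le_csSup hS_bdd ⟨I, hIE, hIp, rfl⟩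
      have hsq : (0:ℝ) < Real.sqrt (c₁ * c₂) := Real.sqrt_pos.2 (mul_pos hJ₁ hJ₂)
      have := le_trans h1 h2
      calc (I.card : ℝ) = ((I.card : ℝ) * (Real.sqrt (c₁ * c₂))⁻¹) * Real.sqrt (c₁ * c₂) :=
            (inv_mul_cancel_right₀ hsq.ne' _).symm
        _ ≤ M * Real.sqrt (c₁ * c₂) := by
            apply mul_le_mul_of_nonneg_right this hsq.le
        _ = Real.sqrt (c₁ * c₂) * M := mul_comm _ _
  -- part 2
  have part2 : Real.sqrt ((J₁.card : ℝ) * J₂.card) * M < p := by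
    rcases eq_or_lt_of_le hM0 with hMeq | hMpos
    · rw [← hMeq, mul_zero]; exact hp0
    · have hNM : ((J₁.card : ℝ) * J₂.card) * M ^ 2 < (p:ℝ) ^ 2 := by
        rw [lt_div_iff₀ (by positivity)] at hr; exact hr
      have hsq : (Real.sqrt ((J₁.card : ℝ) * J₂.card) * M) ^ 2 < (p:ℝ) ^ 2 := by
        rw [mul_pow, Real.sq_sqrt hN0]; exact hNM
      exact lt_of_pow_lt_pow_left₀ 2 hp0.le hsq
  refine ⟨?_, part2⟩
  by_cases hcase : (E ∩ J₁ ×ˢ J₂).card ≤ p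
  · exact key (E ∩ J₁ ×ˢ J₂) (Finset.inter_subset_left) hcase (Finset.inter_subset_right)
  · exfalso
    push_neg at hcase
    obtain ⟨I, hIsub, hIcard⟩ := Finset.exists_subset_card_eq hcase.le
    have hkey := key I (hIsub.trans Finset.inter_subset_left)
      (by rw [hIcard]) (hIsub.trans Finset.inter_subset_right)
    rw [hIcard] at hkey
    -- hkey : p ≤ √N * M, so √N * M ≥ p, contradicting part2
    exact absurd (lt_of_lt_of_le part2 hkey) (lt_irrefl _)
end
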